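/- arXiv:2506.05838 — 11 statements merged into one kernel-verified Lean document; each statement's English description precedes it below -/
import Mathlib

section
/- Let N > 2 and let s_0, …, s_{N−1} be unit vectors in ℝ³ that globally minimize the energy E(S) = Σ_{μ=0}^{N−1} α_μ (s_μ · s_{μ+1}) (indices mod N) for nonzero real couplings α_0, …, α_{N−1}. Then all the vectors s_0, …, s_{N−1} lie in a common two-dimensional linear subspace of ℝ³; in particular the lowest energy configuration is either collinear (all s_μ lie on one line through the origin) or coplanar. -/
open scoped RealInnerProductSpace
open Module

/-!
Varying a single spin `s μ` to `v` changes the energy by `⟪h μ, v - s μ⟫`, where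
`h μ = α (μ - 1) • s (μ - 1) + α μ • s (μ + 1)` is the local field at `μ`. Hence at a minimizer
each spin is antiparallel to its local field, and since `α μ ≠ 0` this makes `s (μ + 1)` a linear
combination of `s (μ - 1)` and `s μ`. Going around the polygon, every spin lies in the span of
`s 0` and `s 1`, which is contained in a plane.
-/

theorem Submodule.exists_le_finrank_eq {K V : Type*} [DivisionRing K] [AddCommGroup V]
    [Module K V] [Module.Finite K V] (W : Submodule K V) {n : ℕ}
    (hW : finrank K W ≤ n) (hn : n ≤ finrank K V) :
    ∃ P : Submodule K V, W ≤ P ∧ finrank K P = n := by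
  obtain ⟨k, rfl⟩ := Nat.exists_eq_add_of_le hW
  induction k generalizing W with
  | zero => exact ⟨W, le_rfl, rfl⟩
  | succ k ih =>
    obtain ⟨v, hv⟩ : ∃ v, v ∉ W := by
      by_contra! hW_top
      rw [eq_top_iff'.mpr hW_top, finrank_top] at hn
      omega
    obtain ⟨P, hWP, hP⟩ := ih (W ⊔ span K {v}) (by rw [finrank_sup_span_singleton hv]; omega)
      (by rw [finrank_sup_span_singleton hv]; omega)
    exact ⟨P, le_sup_left.trans hWP, by rw [hP, finrank_sup_span_singleton hv]; omega⟩

theorem eq_neg_norm_smul_of_forall_inner_le {E : Type*} [NormedAddCommGroup E]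
    [InnerProductSpace ℝ E] {h x : E} (hx : ‖x‖ = 1)
    (hmin : ∀ v : E, ‖v‖ = 1 → ⟪h, x⟫ ≤ ⟪h, v⟫) : h = -(‖h‖ • x) := by
  rcases eq_or_ne h 0 with rfl | h0
  · simp
  have hunit : ‖-(‖h‖⁻¹ • h)‖ = 1 := by
    rw [norm_neg, norm_smul, norm_inv, norm_norm, inv_mul_cancel₀ (norm_ne_zero_iff.mpr h0)]
  have hle : ⟪h, x⟫ ≤ -‖h‖ := by
    simpa [inner_neg_right, real_inner_smul_right, real_inner_self_eq_norm_sq, sq,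
      norm_ne_zero_iff.mpr h0] using hmin _ hunit
  have hge : -‖h‖ ≤ ⟪h, x⟫ := by
    simpa [hx] using neg_le_of_abs_le (abs_real_inner_le_norm h x)
  have hcs : ⟪-h, x⟫ = ‖-h‖ * ‖x‖ := by
    rw [inner_neg_left, norm_neg, hx, mul_one, le_antisymm hle hge, neg_neg]
  have hanti := inner_eq_norm_mul_iff_real.mp hcs
  rw [hx, one_smul, norm_neg] at hanti
  rw [← hanti, neg_neg]

theorem ZMod.forall_of_twoStep {N : ℕ} [NeZero N] {p : ZMod N → Prop} (zero : p 0) (one : p 1)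
    (more : ∀ μ, p μ → p (μ + 1) → p (μ + 2)) (μ : ZMod N) : p μ := by
  rw [← ZMod.natCast_zmod_val μ]
  induction μ.val using Nat.twoStepInduction with
  | zero => simpa using zero
  | one => simpa using one
  | more n hn hn1 => simpa using more _ hn (by simpa using hn1)

namespace SpinPolygon

variable {N : ℕ} [NeZero N] {E : Type*} [NormedAddCommGroup E] [InnerProductSpace ℝ E]
  (α : ZMod N → ℝ) (s : ZMod N → E)

def energy : ℝ := ∑ μ, α μ * ⟪s μ, s (μ + 1)⟫

def localField (μ : ZMod N) : E := α (μ - 1) • s (μ - 1) + α μ • s (μ + 1)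

theorem energy_update (h1 : (1 : ZMod N) ≠ 0) (μ : ZMod N) (v : E) :
    energy α (Function.update s μ v) = energy α s + ⟪localField α s μ, v - s μ⟫ := by
  have hprev : μ - 1 ≠ μ := by simpa using h1
  have hnext : μ + 1 ≠ μ := by simpa using h1
  have hfar : ∀ ν ∉ ({μ - 1, μ} : Finset (ZMod N)),
      α ν * ⟪Function.update s μ v ν, Function.update s μ v (ν + 1)⟫ - α ν * ⟪s ν, s (ν + 1)⟫
        = 0 := by
    intro ν hν
    simp only [Finset.mem_insert, Finset.mem_singleton, not_or] at hν
    have hν1 : ν + 1 ≠ μ := fun h => hν.1 (by rw [← h, add_sub_cancel_right])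
    rw [Function.update_of_ne hν.2, Function.update_of_ne hν1, sub_self]
  have hdiff : energy α (Function.update s μ v) - energy α s = ∑ ν ∈ {μ - 1, μ},
      (α ν * ⟪Function.update s μ v ν, Function.update s μ v (ν + 1)⟫
        - α ν * ⟪s ν, s (ν + 1)⟫) := by
    rw [energy, energy, ← Finset.sum_sub_distrib]
    exact (Finset.sum_subset (Finset.subset_univ _) fun ν _ => hfar ν).symm
  rw [Finset.sum_pair hprev, sub_add_cancel, Function.update_self,
    Function.update_of_ne hprev, Function.update_of_ne hnext] at hdiff
  rw [localField, inner_sub_right, inner_add_left, inner_add_left, real_inner_smul_left,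
    real_inner_smul_left, real_inner_smul_left, real_inner_smul_left,
    real_inner_comm v (s (μ + 1)), real_inner_comm (s μ) (s (μ + 1))]
  linarith

variable {α s}

theorem inner_localField_le_of_isMinOn (h1 : (1 : ZMod N) ≠ 0) (hs : ∀ μ, ‖s μ‖ = 1)
    (hmin : IsMinOn (energy α) {t | ∀ μ, ‖t μ‖ = 1} s) (μ : ZMod N) {v : E} (hv : ‖v‖ = 1) :
    ⟪localField α s μ, s μ⟫ ≤ ⟪localField α s μ, v⟫ := by
  have hunit : ∀ ν, ‖Function.update s μ v ν‖ = 1 := by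
    intro ν
    rcases eq_or_ne ν μ with rfl | hν
    · rwa [Function.update_self]
    · rw [Function.update_of_ne hν, hs]
  have hle := isMinOn_iff.mp hmin _ hunit
  rw [energy_update α s h1, inner_sub_right] at hle
  linarith

theorem localField_eq_neg_norm_smul (h1 : (1 : ZMod N) ≠ 0) (hs : ∀ μ, ‖s μ‖ = 1)
    (hmin : IsMinOn (energy α) {t | ∀ μ, ‖t μ‖ = 1} s) (μ : ZMod N) :
    localField α s μ = -(‖localField α s μ‖ • s μ) :=
  eq_neg_norm_smul_of_forall_inner_le (hs μ) fun _ hv =>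
    inner_localField_le_of_isMinOn h1 hs hmin μ hv

theorem add_one_mem_of_isMinOn (h1 : (1 : ZMod N) ≠ 0) (hα : ∀ μ, α μ ≠ 0)
    (hs : ∀ μ, ‖s μ‖ = 1) (hmin : IsMinOn (energy α) {t | ∀ μ, ‖t μ‖ = 1} s)
    {P : Submodule ℝ E} {μ : ZMod N} (hprev : s (μ - 1) ∈ P) (hcur : s μ ∈ P) :
    s (μ + 1) ∈ P := by
  have hfield : localField α s μ ∈ P := by
    rw [localField_eq_neg_norm_smul h1 hs hmin]
    exact P.neg_mem (P.smul_mem _ hcur)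
  have hsmul : α μ • s (μ + 1) ∈ P := by
    rw [show α μ • s (μ + 1) = localField α s μ - α (μ - 1) • s (μ - 1) by
      rw [localField, add_sub_cancel_left]]
    exact P.sub_mem hfield (P.smul_mem _ hprev)
  exact (P.smul_mem_iff (hα μ)).mp hsmul

end SpinPolygon

/-- The lowest energy configuration of a classical spin polygon is either collinear
or coplanar: all spin vectors lie in a common two-dimensional subspace of ℝ³. -/
theorem lec_coplanar (N : ℕ) [NeZero N] (hN : 2 < N)
    (α : ZMod N → ℝ) (hα : ∀ μ, α μ ≠ 0)
    (s : ZMod N → EuclideanSpace ℝ (Fin 3)) (hs : ∀ μ, ‖s μ‖ = 1)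
    (hmin : ∀ t : ZMod N → EuclideanSpace ℝ (Fin 3), (∀ μ, ‖t μ‖ = 1) →
      ∑ μ : ZMod N, α μ * ⟪s μ, s (μ + 1)⟫ ≤ ∑ μ : ZMod N, α μ * ⟪t μ, t (μ + 1)⟫) :
    ∃ P : Submodule ℝ (EuclideanSpace ℝ (Fin 3)),
      Module.finrank ℝ P = 2 ∧ ∀ μ, s μ ∈ P := by
  have h1 : (1 : ZMod N) ≠ 0 := by
    have : Fact (1 < N) := ⟨by omega⟩
    exact one_ne_zero
  have hmin : IsMinOn (SpinPolygon.energy α) {t | ∀ μ, ‖t μ‖ = 1} s := isMinOn_iff.mpr hmin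
  obtain ⟨P, hspan, hP⟩ := (Submodule.span ℝ (Set.range ![s 0, s 1])).exists_le_finrank_eq
    (n := 2) ((finrank_range_le_card _).trans (by simp)) (by simp)
  refine ⟨P, hP, ZMod.forall_of_twoStep ?_ ?_ fun μ hμ hμ1 => ?_⟩
  · exact hspan (Submodule.subset_span ⟨0, rfl⟩)
  · exact hspan (Submodule.subset_span ⟨1, rfl⟩)
  · rw [show μ + 2 = μ + 1 + 1 by ring]
    exact SpinPolygon.add_one_mem_of_isMinOn h1 hα hs hmin (by rwa [add_sub_cancel_right]) hμ1
end

section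
/- Let (ψ_1, …, ψ_{N−1}) be an LEC of an N-spin polygon in the angle representation, with Ψ := Σ_{μ=1}^{N−1} ψ_μ. Then the quantity β := α_0 sin Ψ satisfies α_0 sin Ψ = |α_μ| sin ψ_μ for every 0 < μ < N; in particular β is independent of μ. Moreover, if additionally sin Ψ ≥ 0, then 0 ≤ ψ_μ ≤ π for all 0 < μ < N. -/
open Real Finset

/-- The energy of an `N`-spin polygon in the angle representation:
`E = α₀ cos (Σ_{μ=1}^{N−1} ψ_μ) + Σ_{μ=1}^{N−1} α_μ cos ψ_μ`. -/
noncomputable def polygonEnergy (N : ℕ) (α ψ : ℕ → ℝ) : ℝ :=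
  α 0 * Real.cos (∑ μ ∈ Finset.Ico 1 N, ψ μ) +
    ∑ μ ∈ Finset.Ico 1 N, α μ * Real.cos (ψ μ)

/-- For every LEC the quantity `β := α₀ sin Ψ` satisfies
`α₀ sin Ψ = |α_μ| sin ψ_μ` for all `0 < μ < N`; moreover if `sin Ψ ≥ 0`
then `0 ≤ ψ_μ ≤ π` for all `0 < μ < N`. -/
theorem lec_lagrange_parameter (N : ℕ) (hN : 2 < N) (α : ℕ → ℝ)
    (hα0 : 0 < α 0) (hαμ : ∀ μ ∈ Finset.Ico 1 N, α μ < 0)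
    (ψ : ℕ → ℝ) (hψ : ∀ μ ∈ Finset.Ico 1 N, ψ μ ∈ Set.Ioc (-π) π)
    (hlec : ∀ φ : ℕ → ℝ, (∀ μ ∈ Finset.Ico 1 N, φ μ ∈ Set.Ioc (-π) π) →
      polygonEnergy N α ψ ≤ polygonEnergy N α φ) :
    (∀ μ ∈ Finset.Ico 1 N,
      α 0 * Real.sin (∑ ν ∈ Finset.Ico 1 N, ψ ν) = |α μ| * Real.sin (ψ μ)) ∧
    (0 ≤ Real.sin (∑ ν ∈ Finset.Ico 1 N, ψ ν) →
      ∀ μ ∈ Finset.Ico 1 N, 0 ≤ ψ μ ∧ ψ μ ≤ π) := by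
  have hp : (0:ℝ) < 2 * π := by positivity
  set S := ∑ ν ∈ Finset.Ico 1 N, ψ ν with hS
  -- key first-order condition
  have key : ∀ μ ∈ Finset.Ico 1 N, α 0 * Real.sin S + α μ * Real.sin (ψ μ) = 0 := by
    intro μ hμ
    set C := ∑ ν ∈ Finset.Ico 1 N \ {μ}, α ν * Real.cos (ψ ν) with hC
    set g : ℝ → ℝ := fun t => α 0 * Real.cos (S + t) + (α μ * Real.cos (ψ μ + t) + C)
      with hg
    -- the perturbed configuration has energy g t
    have hA : ∀ t : ℝ,
        polygonEnergy N α (Function.update ψ μ (toIocMod hp (-π) (ψ μ + t))) = g t := by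
      intro t
      set k := toIocDiv hp (-π) (ψ μ + t) with hk
      have hval : toIocMod hp (-π) (ψ μ + t) = ψ μ + t - (k : ℝ) * (2 * π) := by
        rw [toIocMod, ← hk, zsmul_eq_mul]
      have hsum : ∑ ν ∈ Finset.Ico 1 N,
          Function.update ψ μ (toIocMod hp (-π) (ψ μ + t)) ν
          = S + t - (k : ℝ) * (2 * π) := by
        rw [Finset.sum_update_of_mem hμ, hval, hS,
          ← Finset.sum_sdiff (Finset.singleton_subset_iff.2 hμ),
          Finset.sum_singleton]
        ring
      have hsum2 : ∑ ν ∈ Finset.Ico 1 N,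
          α ν * Real.cos (Function.update ψ μ (toIocMod hp (-π) (ψ μ + t)) ν)
          = α μ * Real.cos (ψ μ + t) + C := by
        rw [← Finset.sum_sdiff (Finset.singleton_subset_iff.2 hμ), Finset.sum_singleton,
          Function.update_self, hval, Real.cos_sub_int_mul_two_pi, hC, add_comm]
        congr 1
        apply Finset.sum_congr rfl
        intro ν hν
        rw [Function.update_of_ne (Finset.notMem_singleton.1 (Finset.mem_sdiff.1 hν).2)]
      rw [polygonEnergy, hsum, hsum2, hg]
      have : S + t - (k : ℝ) * (2 * π) = (S + t) - (k : ℝ) * (2 * π) := by ring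
      rw [this, Real.cos_sub_int_mul_two_pi]
    -- g 0 equals the energy of ψ
    have hB : g 0 = polygonEnergy N α ψ := by
      rw [← hA 0]
      congr 1
      have : toIocMod hp (-π) (ψ μ + 0) = ψ μ := by
        rw [add_zero, toIocMod_eq_self]
        have := hψ μ hμ
        constructor
        · exact this.1
        · have : ψ μ ≤ π := this.2
          linarith
      rw [this, Function.update_eq_self]
    -- g is minimized at 0
    have hmin : IsLocalMin g 0 := by
      have hmo : IsMinOn g Set.univ 0 := by
        intro t _
        have hadm : ∀ ν ∈ Finset.Ico 1 N,
            Function.update ψ μ (toIocMod hp (-π) (ψ μ + t)) ν ∈ Set.Ioc (-π) π := by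
          intro ν hν
          by_cases hνμ : ν = μ
          · subst hνμ
            rw [Function.update_self]
            have := toIocMod_mem_Ioc hp (-π) (ψ ν + t)
            have h2 : -π + 2 * π = π := by ring
            rwa [h2] at this
          · rw [Function.update_of_ne hνμ]; exact hψ ν hν
        have := hlec _ hadm
        rw [hA t] at this
        simpa [hB] using this
      exact hmo.isLocalMin Filter.univ_mem
    -- compute the derivative of g at 0
    have hder : HasDerivAt g (α 0 * (-Real.sin (S + 0) * 1)
        + α μ * (-Real.sin (ψ μ + 0) * 1)) 0 := by
      have h1 : HasDerivAt (fun t : ℝ => S + t) 1 0 := (hasDerivAt_id 0).const_add S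
      have h2 : HasDerivAt (fun t : ℝ => ψ μ + t) 1 0 := (hasDerivAt_id 0).const_add (ψ μ)
      exact ((h1.cos.const_mul (α 0)).add ((h2.cos.const_mul (α μ)).add_const C))
    have hd0 := hmin.deriv_eq_zero
    rw [hder.deriv] at hd0
    simp only [add_zero, mul_one] at hd0
    linarith
  constructor
  · intro μ hμ
    have h := key μ hμ
    have habs : |α μ| = -α μ := abs_of_neg (hαμ μ hμ)
    rw [habs]
    linarith
  · intro hs μ hμ
    have h := key μ hμ
    have hαneg := hαμ μ hμ
    have hsin : 0 ≤ Real.sin (ψ μ) := by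
      by_contra hcon
      push_neg at hcon
      nlinarith [mul_nonneg hα0.le hs]
    have hmem := hψ μ hμ
    constructor
    · by_contra hcon
      push_neg at hcon
      exact absurd hsin (not_le.2 (Real.sin_neg_of_neg_of_neg_pi_lt hcon hmem.1))
    · exact hmem.2
end

section
/- Let 0 < α_0 < |α_τ|, where |α_τ| := min_{0<μ<N} |α_μ|. Then the fully aligned collinear configuration Ψ_{↑…↑} (all ψ_μ = 0, 0 < μ < N) has strictly lower energy than every other collinear configuration, i.e. than every tuple (ψ_1, …, ψ_{N−1}) with each ψ_μ ∈ {0, π} that is not identically 0. -/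
open Real Finset

/-- In the regular domain `0 < α₀ < |α_τ| = min_{0<μ<N} |α_μ|` the fully aligned
collinear configuration (all `ψ_μ = 0`) has strictly lower energy than every other
collinear configuration. -/
theorem aligned_state_min_among_collinear (N : ℕ) (hN : 2 < N) (α : ℕ → ℝ)
    (hα0 : 0 < α 0) (hαμ : ∀ μ ∈ Finset.Ico 1 N, α μ < 0)
    (hreg : ∀ μ ∈ Finset.Ico 1 N, α 0 < |α μ|) :
    ∀ φ : ℕ → ℝ, (∀ μ ∈ Finset.Ico 1 N, φ μ = 0 ∨ φ μ = π) →
      (∃ μ ∈ Finset.Ico 1 N, φ μ ≠ 0) →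
      polygonEnergy N α (fun _ => 0) < polygonEnergy N α φ := by
  rintro φ hcol ⟨μ₀, hμ₀, hne⟩
  have hπ : φ μ₀ = π := (hcol μ₀ hμ₀).resolve_left hne
  have hf0 : ∀ μ ∈ Finset.Ico 1 N, 0 ≤ α μ * Real.cos (φ μ) - α μ := by
    intro μ hμ
    rcases hcol μ hμ with h | h
    · simp [h]
    · have := hαμ μ hμ
      simp only [h, Real.cos_pi]
      nlinarith
  have hfμ₀ : 2 * α 0 < α μ₀ * Real.cos (φ μ₀) - α μ₀ := by
    have h1 := hreg μ₀ hμ₀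
    have h2 := hαμ μ₀ hμ₀
    rw [abs_of_neg h2] at h1
    simp only [hπ, Real.cos_pi]
    linarith
  have hsum : 2 * α 0 < ∑ μ ∈ Finset.Ico 1 N, (α μ * Real.cos (φ μ) - α μ) :=
    lt_of_lt_of_le hfμ₀ (Finset.single_le_sum hf0 hμ₀)
  have hcos : -1 ≤ Real.cos (∑ μ ∈ Finset.Ico 1 N, φ μ) := Real.neg_one_le_cos _
  have hcosmul : α 0 * (-1) ≤ α 0 * Real.cos (∑ μ ∈ Finset.Ico 1 N, φ μ) :=
    mul_le_mul_of_nonneg_left hcos hα0.le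
  unfold polygonEnergy
  rw [Finset.sum_sub_distrib] at hsum
  simp only [Real.cos_zero, mul_one, Finset.sum_const_zero]
  linarith
end

section
/- Let |α_τ| < α_0, where |α_τ| := min_{0<μ<N} |α_μ|, and fix τ with |α_τ| = min_{0<μ<N} |α_μ|. Then the collinear configuration Ψ_{↑…↓} defined by ψ_τ = π and ψ_μ = 0 for μ ≠ τ has strictly lower energy than every collinear configuration (each ψ_μ ∈ {0, π}) that is not of the form ψ_ν = π for a single index ν with |α_ν| = |α_τ| and ψ_μ = 0 for μ ≠ ν. -/
/-!
For a collinear configuration with set `S` of flipped spins (`ψ_μ = π`) the energy is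
`α₀ (-1)^|S| + Σ_μ α_μ + 2 Σ_{μ ∈ S} |α_μ|`, so only `α₀ (-1)^|S| + 2 Σ_S |α_μ|` has to be
compared, and `Ψ_{↑…↓}` gives `-α₀ + 2|α_τ|`. For `|S|` even the first term is `α₀ > |α_τ|`;
for `|S|` odd and at least `3` the sum already exceeds `3|α_τ|`; and for `S = {ν}` the
comparison is `|α_τ| < |α_ν|`, which holds unless `ν` is itself of minimal strength.
-/

open Real Finset

section

variable {ι : Type*}

theorem sum_eq_card_filter_mul_of_mem_zero_or {s : Finset ι} {φ : ι → ℝ} {c : ℝ}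
    (hφ : ∀ μ ∈ s, φ μ = 0 ∨ φ μ = c) :
    ∑ μ ∈ s, φ μ = #{μ ∈ s | φ μ = c} * c := by
  rw [← sum_filter_add_sum_filter_not s (φ · = c), sum_congr rfl fun μ hμ => (mem_filter.mp hμ).2,
    sum_const, nsmul_eq_mul, sum_eq_zero, add_zero]
  intro μ hμ
  obtain ⟨hμs, hμc⟩ := mem_filter.mp hμ
  exact (hφ μ hμs).resolve_right hμc

theorem sum_mul_cos_of_collinear {s : Finset ι} {α φ : ι → ℝ}
    (hφ : ∀ μ ∈ s, φ μ = 0 ∨ φ μ = π) :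
    ∑ μ ∈ s, α μ * cos (φ μ) = ∑ μ ∈ s, α μ + 2 * ∑ μ ∈ s with φ μ = π, -α μ := by
  have hcos : ∀ μ ∈ s, α μ * cos (φ μ) = α μ + if φ μ = π then 2 * -α μ else 0 := by
    intro μ hμ
    rcases hφ μ hμ with h | h
    · simp [h, pi_ne_zero.symm]
    · simp only [h, cos_pi, if_true]
      ring
  rw [sum_congr rfl hcos, sum_add_distrib, ← sum_filter, mul_sum]

theorem eq_ite_of_filter_eq_singleton [DecidableEq ι] {s : Finset ι} {φ : ι → ℝ} {c : ℝ} {ν : ι}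
    (hφ : ∀ μ ∈ s, φ μ = 0 ∨ φ μ = c) (hS : {μ ∈ s | φ μ = c} = {ν}) :
    ∀ μ ∈ s, φ μ = if μ = ν then c else 0 := by
  intro μ hμ
  have hmem : φ μ = c ↔ μ = ν := by
    simpa [hμ] using congrArg (μ ∈ ·) hS
  split_ifs with hμν
  · exact hmem.mpr hμν
  · exact (hφ μ hμ).resolve_right (hμν ∘ hmem.mp)

theorem neg_add_two_mul_lt_of_le_weights {S : Finset ι} {w : ι → ℝ} {a m : ℝ}
    (hm : 0 < m) (hma : m < a) (hw : ∀ μ ∈ S, m ≤ w μ) (hsingle : ∀ ν, S = {ν} → m < w ν) :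
    -a + 2 * m < a * (-1) ^ #S + 2 * ∑ μ ∈ S, w μ := by
  have hsum : #S * m ≤ ∑ μ ∈ S, w μ := by
    simpa [nsmul_eq_mul] using card_nsmul_le_sum S w m hw
  rcases Nat.even_or_odd #S with heven | hodd
  · rw [heven.neg_one_pow]
    nlinarith [(Nat.cast_nonneg #S : (0 : ℝ) ≤ #S)]
  rw [hodd.neg_one_pow]
  obtain hone | hthree : #S = 1 ∨ 3 ≤ #S := by obtain ⟨k, hk⟩ := hodd; omega
  · obtain ⟨ν, rfl⟩ := card_eq_one.mp hone
    simpa using hsingle ν rfl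
  · have : (3 : ℝ) ≤ #S := by exact_mod_cast hthree
    nlinarith

end

theorem polygonEnergy_of_collinear {N : ℕ} {α φ : ℕ → ℝ}
    (hφ : ∀ μ ∈ Ico 1 N, φ μ = 0 ∨ φ μ = π) :
    polygonEnergy N α φ = ∑ μ ∈ Ico 1 N, α μ +
      (α 0 * (-1) ^ #{μ ∈ Ico 1 N | φ μ = π} + 2 * ∑ μ ∈ Ico 1 N with φ μ = π, -α μ) := by
  rw [polygonEnergy, sum_eq_card_filter_mul_of_mem_zero_or hφ, cos_nat_mul_pi,
    sum_mul_cos_of_collinear hφ]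
  ring

theorem updown_state_min_among_collinear_general (N : ℕ) (α : ℕ → ℝ)
    (hαμ : ∀ μ ∈ Finset.Ico 1 N, α μ < 0)
    (τ : ℕ) (hτ : τ ∈ Finset.Ico 1 N)
    (hτmin : ∀ μ ∈ Finset.Ico 1 N, |α τ| ≤ |α μ|)
    (hdom : |α τ| < α 0) :
    ∀ φ : ℕ → ℝ, (∀ μ ∈ Finset.Ico 1 N, φ μ = 0 ∨ φ μ = π) →
      ¬ (∃ ν ∈ Finset.Ico 1 N, |α ν| = |α τ| ∧
          ∀ μ ∈ Finset.Ico 1 N, φ μ = if μ = ν then π else 0) →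
      polygonEnergy N α (fun μ => if μ = τ then π else 0) < polygonEnergy N α φ := by
  intro φ hφ hnot
  have habs : ∀ μ ∈ Ico 1 N, |α μ| = -α μ := fun μ hμ => abs_of_neg (hαμ μ hμ)
  have hupdown : {μ ∈ Ico 1 N | (if μ = τ then π else 0) = π} = {τ} := by
    ext μ
    by_cases hμτ : μ = τ <;> simp [hμτ, hτ, pi_ne_zero.symm]
  rw [polygonEnergy_of_collinear hφ,
    polygonEnergy_of_collinear fun μ _ => by split_ifs <;> simp, hupdown,
    card_singleton, pow_one, sum_singleton, add_lt_add_iff_left, mul_neg_one]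
  refine neg_add_two_mul_lt_of_le_weights (by linarith [hαμ τ hτ]) (habs τ hτ ▸ hdom)
    (fun μ hμ => ?_) fun ν hS => ?_
  · have hμ := (mem_filter.mp hμ).1
    simpa [habs μ hμ, habs τ hτ] using hτmin μ hμ
  · have hν : ν ∈ Ico 1 N := (mem_filter.mp (hS ▸ mem_singleton_self ν)).1
    rw [← habs ν hν, ← habs τ hτ]
    refine (hτmin ν hν).lt_of_ne fun heq => hnot ⟨ν, hν, heq.symm, ?_⟩
    exact eq_ite_of_filter_eq_singleton hφ hS

/-- In the complementary domain `|α_τ| < α₀` the collinear configuration `Ψ_{↑…↓}`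
(`ψ_τ = π`, all other `ψ_μ = 0`) has strictly lower energy than every collinear
configuration not of the form "`ψ_ν = π` for a single index `ν` of minimal
ferromagnetic strength, `ψ_μ = 0` otherwise". -/
theorem updown_state_min_among_collinear (N : ℕ) (hN : 2 < N) (α : ℕ → ℝ)
    (hα0 : 0 < α 0) (hαμ : ∀ μ ∈ Finset.Ico 1 N, α μ < 0)
    (τ : ℕ) (hτ : τ ∈ Finset.Ico 1 N)
    (hτmin : ∀ μ ∈ Finset.Ico 1 N, |α τ| ≤ |α μ|)
    (hdom : |α τ| < α 0) :
    ∀ φ : ℕ → ℝ, (∀ μ ∈ Finset.Ico 1 N, φ μ = 0 ∨ φ μ = π) →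
      ¬ (∃ ν ∈ Finset.Ico 1 N, |α ν| = |α τ| ∧
          ∀ μ ∈ Finset.Ico 1 N, φ μ = if μ = ν then π else 0) →
      polygonEnergy N α (fun μ => if μ = τ then π else 0) < polygonEnergy N α φ :=
  updown_state_min_among_collinear_general N α hαμ τ hτ hτmin hdom
end

section
/- Fix τ with |α_τ| = min_{0<μ<N} |α_μ| and let Ψ_{↑…↑} be the configuration with all ψ_μ = 0, and Ψ_{↑…↓} the configuration with ψ_τ = π and ψ_μ = 0 for μ ≠ τ. Then E(Ψ_{↑…↑}) − E(Ψ_{↑…↓}) = 2(α_0 − |α_τ|); in particular, if α_0 = |α_τ| then E(Ψ_{↑…↑}) = E(Ψ_{↑…↓}), and this common value is strictly lower than the energy of every collinear configuration that is neither identically 0 nor of the form ψ_ν = π for a single index ν with |α_ν| = |α_τ| and ψ_μ = 0 otherwise. -/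
open Real Finset

noncomputable def flipConfig (T : Finset ℕ) : ℕ → ℝ := fun μ => if μ ∈ T then π else 0

section

variable {N : ℕ} {α : ℕ → ℝ}

theorem polygonEnergy_congr {ψ ψ' : ℕ → ℝ} (h : ∀ μ ∈ Ico 1 N, ψ μ = ψ' μ) :
    polygonEnergy N α ψ = polygonEnergy N α ψ' := by
  unfold polygonEnergy
  rw [sum_congr rfl h, sum_congr rfl fun μ hμ => congrArg (α μ * cos ·) (h μ hμ)]

theorem polygonEnergy_flipConfig {T : Finset ℕ} (hT : T ⊆ Ico 1 N) :
    polygonEnergy N α (flipConfig T) =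
      α 0 * (-1) ^ #T + ∑ μ ∈ Ico 1 N, α μ - 2 * ∑ μ ∈ T, α μ := by
  have htotal : ∑ μ ∈ Ico 1 N, flipConfig T μ = #T * π := by
    simp only [flipConfig]
    rw [sum_ite_mem, inter_eq_right.mpr hT, sum_const, nsmul_eq_mul]
  have hterm : ∀ μ, α μ * cos (flipConfig T μ) = α μ - 2 * if μ ∈ T then α μ else 0 := by
    intro μ
    by_cases hμ : μ ∈ T <;> simp [flipConfig, hμ]
    ring
  rw [polygonEnergy, htotal, cos_nat_mul_pi, sum_congr rfl fun μ _ => hterm μ, sum_sub_distrib,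
    ← mul_sum, sum_ite_mem, inter_eq_right.mpr hT]
  ring

theorem polygonEnergy_zero : polygonEnergy N α (fun _ => 0) = α 0 + ∑ μ ∈ Ico 1 N, α μ := by
  simp [polygonEnergy]

theorem polygonEnergy_zero_sub_single {ν : ℕ} (hν : ν ∈ Ico 1 N) :
    polygonEnergy N α (fun _ => 0) - polygonEnergy N α (fun μ => if μ = ν then π else 0) =
      2 * (α 0 + α ν) := by
  have hsingle : (fun μ => if μ = ν then π else 0) = flipConfig {ν} := by
    ext μ; simp [flipConfig]
  rw [polygonEnergy_zero, hsingle, polygonEnergy_flipConfig (singleton_subset_iff.mpr hν)]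
  simp only [card_singleton, sum_singleton]
  ring

theorem eq_flipConfig_of_collinear {φ : ℕ → ℝ} (hφ : ∀ μ ∈ Ico 1 N, φ μ = 0 ∨ φ μ = π) :
    ∀ μ ∈ Ico 1 N, φ μ = flipConfig ((Ico 1 N).filter (φ · = π)) μ := by
  intro μ hμ
  rcases hφ μ hμ with h | h <;> simp [flipConfig, hμ, h, pi_ne_zero.symm]

theorem polygonEnergy_zero_lt_flipConfig (hα0 : 0 < α 0) {T : Finset ℕ} (hT : T ⊆ Ico 1 N)
    (hmin : ∀ μ ∈ T, α 0 ≤ -α μ) (hcard : 1 < #T) :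
    polygonEnergy N α (fun _ => 0) < polygonEnergy N α (flipConfig T) := by
  have hsum : #T • α 0 ≤ ∑ μ ∈ T, -α μ := card_nsmul_le_sum T _ _ hmin
  have hsign : -1 ≤ (-1 : ℝ) ^ #T := neg_le_of_abs_le (abs_neg_one_pow #T).le
  have hcard' : (2 : ℝ) ≤ #T := by exact_mod_cast hcard
  rw [nsmul_eq_mul, sum_neg_distrib] at hsum
  rw [polygonEnergy_zero, polygonEnergy_flipConfig hT]
  nlinarith

end

theorem collinear_energy_difference_general (N : ℕ) (α : ℕ → ℝ)
    (hα0 : 0 < α 0) (hαμ : ∀ μ ∈ Finset.Ico 1 N, α μ < 0)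
    (τ : ℕ) (hτ : τ ∈ Finset.Ico 1 N)
    (hτmin : ∀ μ ∈ Finset.Ico 1 N, |α τ| ≤ |α μ|) :
    polygonEnergy N α (fun _ => 0) -
        polygonEnergy N α (fun μ => if μ = τ then π else 0) =
      2 * (α 0 - |α τ|) ∧
    (α 0 = |α τ| →
      polygonEnergy N α (fun _ => 0) =
        polygonEnergy N α (fun μ => if μ = τ then π else 0) ∧
      ∀ φ : ℕ → ℝ, (∀ μ ∈ Finset.Ico 1 N, φ μ = 0 ∨ φ μ = π) →
        ¬ (∀ μ ∈ Finset.Ico 1 N, φ μ = 0) →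
        ¬ (∃ ν ∈ Finset.Ico 1 N, |α ν| = |α τ| ∧
            ∀ μ ∈ Finset.Ico 1 N, φ μ = if μ = ν then π else 0) →
        polygonEnergy N α (fun _ => 0) < polygonEnergy N α φ) := by
  have hdiff : polygonEnergy N α (fun _ => 0) -
      polygonEnergy N α (fun μ => if μ = τ then π else 0) = 2 * (α 0 - |α τ|) := by
    rw [polygonEnergy_zero_sub_single hτ, abs_of_neg (hαμ τ hτ)]
    ring
  refine ⟨hdiff, fun hα0τ => ⟨by linarith, fun φ hφ hφ_ne_zero hφ_ne_single => ?_⟩⟩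
  have hmin : ∀ μ ∈ Ico 1 N, α 0 ≤ -α μ := fun μ hμ => by
    rw [hα0τ, ← abs_of_neg (hαμ μ hμ)]
    exact hτmin μ hμ
  set T := (Ico 1 N).filter (φ · = π)
  have hT : T ⊆ Ico 1 N := filter_subset _ _
  have hφT : ∀ μ ∈ Ico 1 N, φ μ = flipConfig T μ := eq_flipConfig_of_collinear hφ
  have hT_ne : T.Nonempty := by
    by_contra! hT_empty
    exact hφ_ne_zero fun μ hμ => by simpa [hT_empty, flipConfig] using hφT μ hμ
  obtain ⟨ν, hTν⟩ | hT_nontrivial := hT_ne.exists_eq_singleton_or_nontrivial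
  · have hν : ν ∈ Ico 1 N := hT (hTν ▸ mem_singleton_self ν)
    have hφν : ∀ μ ∈ Ico 1 N, φ μ = if μ = ν then π else 0 := fun μ hμ => by
      simpa [hTν, flipConfig] using hφT μ hμ
    have hαν : α 0 < -α ν := (hmin ν hν).lt_of_ne fun h =>
      hφ_ne_single ⟨ν, hν, by rw [abs_of_neg (hαμ ν hν), ← h, hα0τ], hφν⟩
    rw [polygonEnergy_congr hφν]
    linarith [polygonEnergy_zero_sub_single (α := α) hν]
  · rw [polygonEnergy_congr hφT]
    exact polygonEnergy_zero_lt_flipConfig hα0 hT (fun μ hμ => hmin μ (hT hμ))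
      (one_lt_card_iff_nontrivial.mpr hT_nontrivial)

/-- `E(Ψ_{↑…↑}) − E(Ψ_{↑…↓}) = 2(α₀ − |α_τ|)`; in particular for `α₀ = |α_τ|` the
two energies coincide and are strictly lower than the energy of every collinear
configuration that is neither identically `0` nor of the single-`π` form at an
index of minimal ferromagnetic strength. -/
theorem collinear_energy_difference (N : ℕ) (hN : 2 < N) (α : ℕ → ℝ)
    (hα0 : 0 < α 0) (hαμ : ∀ μ ∈ Finset.Ico 1 N, α μ < 0)
    (τ : ℕ) (hτ : τ ∈ Finset.Ico 1 N)
    (hτmin : ∀ μ ∈ Finset.Ico 1 N, |α τ| ≤ |α μ|) :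
    polygonEnergy N α (fun _ => 0) -
        polygonEnergy N α (fun μ => if μ = τ then π else 0) =
      2 * (α 0 - |α τ|) ∧
    (α 0 = |α τ| →
      polygonEnergy N α (fun _ => 0) =
        polygonEnergy N α (fun μ => if μ = τ then π else 0) ∧
      ∀ φ : ℕ → ℝ, (∀ μ ∈ Finset.Ico 1 N, φ μ = 0 ∨ φ μ = π) →
        ¬ (∀ μ ∈ Finset.Ico 1 N, φ μ = 0) →
        ¬ (∃ ν ∈ Finset.Ico 1 N, |α ν| = |α τ| ∧
            ∀ μ ∈ Finset.Ico 1 N, φ μ = if μ = ν then π else 0) →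
        polygonEnergy N α (fun _ => 0) < polygonEnergy N α φ) :=
  collinear_energy_difference_general N α hα0 hαμ τ hτ hτmin
end

section
/- Let (ψ_1, …, ψ_{N−1}) be a coplanar LEC of an N-spin polygon with sin Ψ ≥ 0, where Ψ := Σ_{μ=1}^{N−1} ψ_μ, and let ψ_0 ∈ (−π, π] be the unique angle with Ψ + ψ_0 ∈ 2πℤ. Then Ψ + ψ_0 = 0 (i.e. the integer k with Ψ + ψ_0 = 2kπ equals 0) and moreover 0 < Ψ < π. -/
open Real Finset

/-- For every coplanar LEC with `sin Ψ ≥ 0` and `ψ₀ ∈ (−π, π]` determined by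
`Ψ + ψ₀ ∈ 2πℤ`, one has `Ψ + ψ₀ = 0` (i.e. `k = 0`) and `0 < Ψ < π`. -/
theorem coplanar_lec_k_eq_zero (N : ℕ) (hN : 2 < N) (α : ℕ → ℝ)
    (hα0 : 0 < α 0) (hαμ : ∀ μ ∈ Finset.Ico 1 N, α μ < 0)
    (ψ : ℕ → ℝ) (hψ : ∀ μ ∈ Finset.Ico 1 N, ψ μ ∈ Set.Ioc (-π) π)
    (hlec : ∀ φ : ℕ → ℝ, (∀ μ ∈ Finset.Ico 1 N, φ μ ∈ Set.Ioc (-π) π) →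
      polygonEnergy N α ψ ≤ polygonEnergy N α φ)
    (hcoplanar : ¬ (∀ μ ∈ Finset.Ico 1 N, ψ μ = 0 ∨ ψ μ = π))
    (hsin : 0 ≤ Real.sin (∑ μ ∈ Finset.Ico 1 N, ψ μ))
    (ψ0 : ℝ) (hψ0 : ψ0 ∈ Set.Ioc (-π) π)
    (hk : ∃ k : ℤ, (∑ μ ∈ Finset.Ico 1 N, ψ μ) + ψ0 = 2 * (k : ℝ) * π) :
    (∑ μ ∈ Finset.Ico 1 N, ψ μ) + ψ0 = 0 ∧
      0 < ∑ μ ∈ Finset.Ico 1 N, ψ μ ∧ (∑ μ ∈ Finset.Ico 1 N, ψ μ) < π := by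
  set S := ∑ μ ∈ Finset.Ico 1 N, ψ μ with hSdef
  have hne : (Finset.Ico 1 N).Nonempty := by
    refine ⟨1, ?_⟩; simp [Finset.mem_Ico]; omega
  -- Step 1: stationarity equations
  have key : ∀ ν ∈ Finset.Ico 1 N, α 0 * Real.sin S + α ν * Real.sin (ψ ν) = 0 := by
    intro ν hν
    set c := S - ψ ν with hc
    set f : ℝ → ℝ := fun x => α 0 * Real.cos (c + x) + α ν * Real.cos x with hf
    -- decompose S
    have hSsplit : ∑ μ ∈ (Finset.Ico 1 N) \ {ν}, ψ μ = S - ψ ν := by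
      have := Finset.sum_eq_sum_sdiff_singleton_add hν ψ
      rw [hSdef]; linarith [this]
    have hmin : ∀ y : ℝ, f (ψ ν) ≤ f y := by
      intro y
      set x := toIocMod Real.two_pi_pos (-π) y with hx
      have hxmem : x ∈ Set.Ioc (-π) π := by
        have h := toIocMod_mem_Ioc Real.two_pi_pos (-π) y
        have : -π + 2 * π = π := by ring
        rwa [this] at h
      obtain ⟨n, hn⟩ : ∃ n : ℤ, y = x + (n : ℝ) * (2 * π) := by
        refine ⟨toIocDiv Real.two_pi_pos (-π) y, ?_⟩
        have h := self_sub_toIocMod Real.two_pi_pos (-π) y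
        rw [zsmul_eq_mul] at h
        linarith [h]
      have hcosy : Real.cos y = Real.cos x := by
        rw [hn, Real.cos_add_int_mul_two_pi]
      have hcoscy : Real.cos (c + y) = Real.cos (c + x) := by
        rw [hn, show c + (x + (n:ℝ) * (2*π)) = (c + x) + (n:ℝ) * (2*π) by ring,
          Real.cos_add_int_mul_two_pi]
      set φ : ℕ → ℝ := Function.update ψ ν x with hφ
      have hφmem : ∀ μ ∈ Finset.Ico 1 N, φ μ ∈ Set.Ioc (-π) π := by
        intro μ hμ
        by_cases h : μ = ν
        · subst h; simpa [hφ] using hxmem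
        · simpa [hφ, Function.update_apply, h] using hψ μ hμ
      have hφsum : ∑ μ ∈ Finset.Ico 1 N, φ μ = c + x := by
        rw [hφ, Finset.sum_update_of_mem hν, hSsplit, hc]; ring
      have hφsum2 : ∑ μ ∈ Finset.Ico 1 N, α μ * Real.cos (φ μ)
          = α ν * Real.cos x + ∑ μ ∈ (Finset.Ico 1 N) \ {ν}, α μ * Real.cos (ψ μ) := by
        have : ∀ μ ∈ Finset.Ico 1 N, α μ * Real.cos (φ μ)
            = Function.update (fun μ => α μ * Real.cos (ψ μ)) ν (α ν * Real.cos x) μ := by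
          intro μ _
          by_cases h : μ = ν
          · subst h; simp [hφ]
          · simp [hφ, Function.update_apply, h]
        rw [Finset.sum_congr rfl this, Finset.sum_update_of_mem hν]
      have hψsum2 : ∑ μ ∈ Finset.Ico 1 N, α μ * Real.cos (ψ μ)
          = α ν * Real.cos (ψ ν) + ∑ μ ∈ (Finset.Ico 1 N) \ {ν}, α μ * Real.cos (ψ μ) := by
        have := Finset.sum_eq_sum_sdiff_singleton_add hν (fun μ => α μ * Real.cos (ψ μ))
        rw [this]; ring
      have hE := hlec φ hφmem
      rw [polygonEnergy, polygonEnergy, hφsum, hφsum2, hψsum2, ← hSdef] at hE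
      have hcS : c + ψ ν = S := by rw [hc]; ring
      simp only [hf]
      rw [hcS, hcosy, hcoscy]
      linarith [hE]
    have hloc : IsLocalMin f (ψ ν) := Filter.Eventually.of_forall hmin
    have hd : HasDerivAt f (α 0 * (-Real.sin (c + ψ ν) * 1) + α ν * -Real.sin (ψ ν)) (ψ ν) := by
      have h1 : HasDerivAt (fun x : ℝ => c + x) 1 (ψ ν) := (hasDerivAt_id _).const_add c
      exact (h1.cos.const_mul (α 0)).add ((Real.hasDerivAt_cos (ψ ν)).const_mul (α ν))
    have h0 := hloc.hasDerivAt_eq_zero hd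
    have hcS : c + ψ ν = S := by rw [hc]; ring
    rw [hcS] at h0
    linarith [h0]
  -- Step 2: sin S > 0
  have hsinS : 0 < Real.sin S := by
    rcases lt_or_eq_of_le hsin with h | h
    · exact h
    · exfalso
      apply hcoplanar
      intro μ hμ
      have hk := key μ hμ
      rw [← h] at hk
      have hαne : α μ ≠ 0 := ne_of_lt (hαμ μ hμ)
      have hsinμ : Real.sin (ψ μ) = 0 := by
        have : α μ * Real.sin (ψ μ) = 0 := by linarith
        exact (mul_eq_zero.mp this).resolve_left hαne
      rcases eq_or_lt_of_le (hψ μ hμ).2 with hp | hp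
      · right; exact hp
      · left; exact (Real.sin_eq_zero_iff_of_lt_of_lt (hψ μ hμ).1 hp).mp hsinμ
  -- Step 3: each ψ ν ∈ (0, π)
  have hψpos : ∀ ν ∈ Finset.Ico 1 N, 0 < ψ ν ∧ ψ ν < π := by
    intro ν hν
    have hkν := key ν hν
    have hαν := hαμ ν hν
    have hsinν : 0 < Real.sin (ψ ν) := by
      by_contra h
      push_neg at h
      nlinarith
    constructor
    · by_contra h
      push_neg at h
      have := Real.sin_nonpos_of_nonpos_of_neg_pi_le h (le_of_lt (hψ ν hν).1)
      linarith
    · rcases eq_or_lt_of_le (hψ ν hν).2 with hp | hp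
      · rw [hp] at hsinν; simp [Real.sin_pi] at hsinν
      · exact hp
  -- Step 4: S > 0
  have hSpos : 0 < S := by
    rw [hSdef]
    exact Finset.sum_pos (fun ν hν => (hψpos ν hν).1) hne
  -- Step 5: ψ0 < 0
  obtain ⟨k, hkeq⟩ := hk
  have hψ0neg : ψ0 < 0 := by
    have hsinψ0 : Real.sin ψ0 = -Real.sin S := by
      have : ψ0 = -S + (k : ℝ) * (2 * π) := by linarith [hkeq]
      rw [this, Real.sin_add_int_mul_two_pi, Real.sin_neg]
    by_contra h
    push_neg at h
    have := Real.sin_nonneg_of_nonneg_of_le_pi h (hψ0.2)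
    rw [hsinψ0] at this
    linarith
  -- Step 6 & 7: k = 0
  have hπ := Real.pi_pos
  have hk0 : k = 0 := by
    by_contra hkne
    have hk1 : 1 ≤ k ∨ k ≤ -1 := by omega
    rcases hk1 with hk1 | hk1
    · -- S > 2π ; scaling competitor
      have hS2π : 2 * π < S := by
        have : (2:ℝ) * π ≤ 2 * (k:ℝ) * π := by
          have : (1:ℝ) ≤ (k:ℝ) := by exact_mod_cast hk1
          nlinarith
        linarith [hkeq]
      set t := (S - 2 * π) / S with ht
      have hSne : S ≠ 0 := ne_of_gt hSpos
      have ht0 : 0 ≤ t := by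
        rw [ht]; apply div_nonneg (by linarith) (le_of_lt hSpos)
      have ht1 : t < 1 := by
        rw [ht, div_lt_one hSpos]; linarith
      set φ : ℕ → ℝ := fun μ => t * ψ μ with hφ
      have hφmem : ∀ μ ∈ Finset.Ico 1 N, φ μ ∈ Set.Ioc (-π) π := by
        intro μ hμ
        have h1 := (hψpos μ hμ).1
        have h2 := (hψpos μ hμ).2
        constructor
        · have : 0 ≤ t * ψ μ := by positivity
          simp only [hφ]; linarith
        · simp only [hφ]; nlinarith
      have hφsum : ∑ μ ∈ Finset.Ico 1 N, φ μ = S - 2 * π := by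
        simp only [hφ]
        rw [← Finset.mul_sum, ← hSdef, ht]
        field_simp
      have hlt : polygonEnergy N α φ < polygonEnergy N α ψ := by
        rw [polygonEnergy, polygonEnergy, hφsum, ← hSdef, Real.cos_sub_two_pi]
        have : ∑ μ ∈ Finset.Ico 1 N, α μ * Real.cos (φ μ)
            < ∑ μ ∈ Finset.Ico 1 N, α μ * Real.cos (ψ μ) := by
          apply Finset.sum_lt_sum_of_nonempty hne
          intro μ hμ
          have h1 := (hψpos μ hμ).1
          have h2 := (hψpos μ hμ).2
          have hc : Real.cos (ψ μ) < Real.cos (φ μ) := by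
            apply Real.cos_lt_cos_of_nonneg_of_le_pi (by positivity) (le_of_lt h2)
            simp only [hφ]; nlinarith
          have := hαμ μ hμ
          nlinarith
        linarith
      exact absurd (hlec φ hφmem) (not_le.mpr hlt)
    · -- k ≤ -1 : S < 0, contradiction
      have : (k:ℝ) ≤ -1 := by exact_mod_cast hk1
      have : 2 * (k:ℝ) * π ≤ -2 * π := by nlinarith
      have hψ0gt := hψ0.1
      linarith [hkeq]
  rw [hk0] at hkeq
  simp at hkeq
  refine ⟨by linarith, hSpos, by linarith [hψ0.1]⟩
end

section
/- Assume the regular domain 0 < α_0 < |α_τ|, where |α_τ| := min_{0<μ<N} |α_μ|. Then every LEC (ψ_1, …, ψ_{N−1}) with sin Ψ ≥ 0 (Ψ := Σ_{μ=1}^{N−1} ψ_μ) satisfies 0 ≤ ψ_μ ≤ π/2 for all 0 < μ < N. -/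
open Real Finset

/-- In the regular domain `0 < α₀ < |α_τ| = min_{0<μ<N} |α_μ|`, every LEC with
`sin Ψ ≥ 0` satisfies `0 ≤ ψ_μ ≤ π/2` for all `0 < μ < N`. -/
theorem regular_domain_lec_angles_le_pi_div_two (N : ℕ) (hN : 2 < N) (α : ℕ → ℝ)
    (hα0 : 0 < α 0) (hαμ : ∀ μ ∈ Finset.Ico 1 N, α μ < 0)
    (hreg : ∀ μ ∈ Finset.Ico 1 N, α 0 < |α μ|)
    (ψ : ℕ → ℝ) (hψ : ∀ μ ∈ Finset.Ico 1 N, ψ μ ∈ Set.Ioc (-π) π)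
    (hlec : ∀ φ : ℕ → ℝ, (∀ μ ∈ Finset.Ico 1 N, φ μ ∈ Set.Ioc (-π) π) →
      polygonEnergy N α ψ ≤ polygonEnergy N α φ)
    (hsin : 0 ≤ Real.sin (∑ μ ∈ Finset.Ico 1 N, ψ μ)) :
    ∀ μ ∈ Finset.Ico 1 N, 0 ≤ ψ μ ∧ ψ μ ≤ π / 2 := by
  intro μ hμ
  set Ψ : ℝ := ∑ ν ∈ Finset.Ico 1 N, ψ ν with hΨ
  have hαμ' : α μ < 0 := hαμ μ hμ
  have hreg' : α 0 < -(α μ) := by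
    have := hreg μ hμ; rwa [abs_of_neg hαμ'] at this
  have hψμ : ψ μ ∈ Set.Ioc (-π) π := hψ μ hμ
  have h2π : (0:ℝ) < 2 * π := by positivity
  -- the key perturbation inequality
  set A : ℝ := α 0 * Real.cos Ψ + α μ * Real.cos (ψ μ) with hA_def
  set B : ℝ := α 0 * Real.sin Ψ + α μ * Real.sin (ψ μ) with hB_def
  have key : ∀ t : ℝ, 0 ≤ A * (Real.cos t - 1) - B * Real.sin t := by
    intro t
    set r : ℝ := toIocMod h2π (-π) (ψ μ + t) with hr_def
    have hr_mem : r ∈ Set.Ioc (-π) (-π + 2 * π) := toIocMod_mem_Ioc h2π _ _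
    obtain ⟨k, hk⟩ : ∃ k : ℤ, r = ψ μ + t - k * (2 * π) := by
      refine ⟨toIocDiv h2π (-π) (ψ μ + t), ?_⟩
      have := toIocMod_add_toIocDiv_zsmul h2π (-π) (ψ μ + t)
      rw [zsmul_eq_mul] at this
      linarith
    have hcosr : Real.cos r = Real.cos (ψ μ + t) := by
      rw [hk, Real.cos_sub_int_mul_two_pi]
    set φ : ℕ → ℝ := Function.update ψ μ r with hφ_def
    have hφmem : ∀ ν ∈ Finset.Ico 1 N, φ ν ∈ Set.Ioc (-π) π := by
      intro ν hν
      by_cases hvμ : ν = μ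
      · subst hvμ
        simp only [hφ_def, Function.update_self]
        constructor
        · exact hr_mem.1
        · have := hr_mem.2; linarith
      · simpa [hφ_def, Function.update_of_ne hvμ] using hψ ν hν
    have hsumφ : ∑ ν ∈ Finset.Ico 1 N, φ ν = Ψ - ψ μ + r := by
      rw [hφ_def, Finset.sum_update_of_mem hμ, hΨ,
        ← Finset.add_sum_erase _ ψ hμ, Finset.sdiff_singleton_eq_erase]
      ring
    have hsum2 : ∑ ν ∈ Finset.Ico 1 N, α ν * Real.cos (φ ν)
        = (∑ ν ∈ Finset.Ico 1 N, α ν * Real.cos (ψ ν)) - α μ * Real.cos (ψ μ)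
          + α μ * Real.cos r := by
      have h1 : ∀ ν ∈ Finset.Ico 1 N, α ν * Real.cos (φ ν)
          = Function.update (fun ν => α ν * Real.cos (ψ ν)) μ (α μ * Real.cos r) ν := by
        intro ν _
        by_cases hvμ : ν = μ
        · subst hvμ; simp [hφ_def]
        · simp [hφ_def, Function.update_of_ne hvμ]
      rw [Finset.sum_congr rfl h1, Finset.sum_update_of_mem hμ,
        ← Finset.add_sum_erase _ (fun ν => α ν * Real.cos (ψ ν)) hμ,
        Finset.sdiff_singleton_eq_erase]
      ring
    have hE := hlec φ hφmem
    unfold polygonEnergy at hE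
    rw [hsumφ, hsum2, ← hΨ] at hE
    have hcosΨr : Real.cos (Ψ - ψ μ + r) = Real.cos (Ψ + t) := by
      rw [hk]
      have : Ψ - ψ μ + (ψ μ + t - ↑k * (2 * π)) = Ψ + t - ↑k * (2 * π) := by ring
      rw [this, Real.cos_sub_int_mul_two_pi]
    rw [hcosΨr, hcosr] at hE
    have e1 : Real.cos (Ψ + t) = Real.cos Ψ * Real.cos t - Real.sin Ψ * Real.sin t :=
      Real.cos_add Ψ t
    have e2 : Real.cos (ψ μ + t)
        = Real.cos (ψ μ) * Real.cos t - Real.sin (ψ μ) * Real.sin t :=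
      Real.cos_add (ψ μ) t
    rw [hA_def, hB_def]
    nlinarith [hE, e1, e2]
  -- first-order condition: B = 0
  have hB : B = 0 := by
    set h : ℝ → ℝ := fun t => A * (Real.cos t - 1) - B * Real.sin t with hh_def
    have hmin : IsLocalMin h 0 := by
      apply Filter.Eventually.of_forall
      intro t
      have := key t
      simp [hh_def]
      linarith [key t]
    have hderiv : HasDerivAt h (A * (-Real.sin 0) - B * Real.cos 0) 0 := by
      exact (((Real.hasDerivAt_cos 0).sub_const 1).const_mul A).sub
        ((Real.hasDerivAt_sin 0).const_mul B)
    have h1 : deriv h 0 = 0 := hmin.deriv_eq_zero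
    have h2 : deriv h 0 = A * (-Real.sin 0) - B * Real.cos 0 := hderiv.deriv
    rw [h1] at h2
    simp at h2
    linarith [h2]
  -- second-order condition: A ≤ 0
  have hA : A ≤ 0 := by
    have := key π
    simp [Real.cos_pi, Real.sin_pi] at this
    linarith
  -- sin ψ μ ≥ 0
  have hsinψ : 0 ≤ Real.sin (ψ μ) := by
    rcases le_or_gt 0 (Real.sin (ψ μ)) with h | h
    · exact h
    · exfalso
      have : α μ * Real.sin (ψ μ) > 0 := mul_pos_of_neg_of_neg hαμ' h
      nlinarith [mul_nonneg hα0.le hsin]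
  have hψ0 : 0 ≤ ψ μ := by
    by_contra hcon
    push_neg at hcon
    exact absurd hsinψ (not_le.2 (Real.sin_neg_of_neg_of_neg_pi_lt hcon hψμ.1))
  refine ⟨hψ0, ?_⟩
  by_contra hcon
  push_neg at hcon
  have hcosneg : Real.cos (ψ μ) < 0 := by
    apply Real.cos_neg_of_pi_div_two_lt_of_lt hcon
    have := hψμ.2
    nlinarith [Real.pi_pos]
  -- A ≤ 0 gives α 0 * cos Ψ ≤ -(α μ) * cos (ψ μ) < 0, so squares reverse
  have hx : α 0 * Real.cos Ψ ≤ (-(α μ)) * Real.cos (ψ μ) := by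
    rw [hA_def] at hA; linarith
  have hy : (-(α μ)) * Real.cos (ψ μ) < 0 :=
    mul_neg_of_pos_of_neg (by linarith) hcosneg
  have hsq : ((-(α μ)) * Real.cos (ψ μ))^2 ≤ (α 0 * Real.cos Ψ)^2 := by
    nlinarith
  have hu : α 0 * Real.sin Ψ = (-(α μ)) * Real.sin (ψ μ) := by
    rw [hB_def] at hB; linarith
  have hpyth1 := Real.sin_sq_add_cos_sq Ψ
  have hpyth2 := Real.sin_sq_add_cos_sq (ψ μ)
  have e1 : (α 0 * Real.sin Ψ)^2 + (α 0 * Real.cos Ψ)^2 = (α 0)^2 := by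
    linear_combination (α 0)^2 * hpyth1
  have e2 : ((-(α μ)) * Real.sin (ψ μ))^2 + ((-(α μ)) * Real.cos (ψ μ))^2 = (α μ)^2 := by
    linear_combination (α μ)^2 * hpyth2
  have hu2 : (α 0 * Real.sin Ψ)^2 = ((-(α μ)) * Real.sin (ψ μ))^2 := by rw [hu]
  have hlt : (α 0)^2 < (α μ)^2 := by nlinarith [hreg', hα0]
  linarith [e1, e2, hsq, hu2, hlt]
end

section
/- Assume 0 < α_0 < |α_τ|, where |α_τ| := min_{0<μ<N} |α_μ|, and define f : [0, π] → ℝ by f(Ψ) = Σ_{μ=1}^{N−1} arcsin((α_0/|α_μ|) sin Ψ). Then f is strictly concave on (0, π), i.e. its second derivative is strictly negative there; and if additionally α_0 ≤ α_(c) := (Σ_{μ=1}^{N−1} |α_μ|^{−1})^{−1}, then f(Ψ) < Ψ for all Ψ ∈ (0, π]. -/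
/-!
Each summand `g_c(Ψ) = arcsin (c sin Ψ)`, `c = α₀/|α_μ| ∈ (0, 1)`, has
`g_c'' = c sin Ψ (c² - 1) / (1 - c² sin² Ψ)^{3/2}`, negative where `sin Ψ > 0`.
For the fixed point bound, `arcsin` is strictly convex on `[0, 1]` with `arcsin 0 = 0`, so
`arcsin (c t) < c arcsin t`; summing, `f(Ψ) < (Σ c_μ) arcsin (sin Ψ) ≤ arcsin (sin Ψ) ≤ Ψ`, and
`Σ c_μ = α₀ / α_(c) ≤ 1` is exactly the hypothesis `α₀ ≤ α_(c)`.
-/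

open Real Finset

section ArcsinMulSin

variable {c : ℝ}

lemma abs_mul_sin_lt_one (hc : |c| < 1) (x : ℝ) : |c * sin x| < 1 := by
  rw [abs_mul]
  exact (mul_le_of_le_one_right (abs_nonneg c) (abs_sin_le_one x)).trans_lt hc

lemma one_sub_mul_sin_sq_pos (hc : |c| < 1) (x : ℝ) : 0 < 1 - (c * sin x) ^ 2 := by
  nlinarith [sq_lt_one_iff_abs_lt_one _ |>.2 (abs_mul_sin_lt_one hc x)]

lemma hasDerivAt_arcsin_mul_sin (hc : |c| < 1) (x : ℝ) :
    HasDerivAt (fun x => arcsin (c * sin x)) (c * cos x / √(1 - (c * sin x) ^ 2)) x := by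
  obtain ⟨h₁, h₂⟩ := abs_lt.1 (abs_mul_sin_lt_one hc x)
  refine ((hasDerivAt_arcsin h₁.ne' h₂.ne).comp x
    ((hasDerivAt_sin x).const_mul c)).congr_deriv ?_
  ring

lemma hasDerivAt_mul_cos_div_sqrt (hc : |c| < 1) (x : ℝ) :
    HasDerivAt (fun x => c * cos x / √(1 - (c * sin x) ^ 2))
      (c * sin x * (c ^ 2 - 1) / √(1 - (c * sin x) ^ 2) ^ 3) x := by
  have hw := one_sub_mul_sin_sq_pos hc x
  have hs : 0 < √(1 - (c * sin x) ^ 2) := sqrt_pos.2 hw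
  have hw' : HasDerivAt (fun x => 1 - (c * sin x) ^ 2) (-(2 * c ^ 2 * sin x * cos x)) x :=
    ((((hasDerivAt_sin x).const_mul c).pow 2).const_sub 1).congr_deriv (by ring)
  refine (((hasDerivAt_cos x).const_mul c).div (hw'.sqrt hw.ne') hs.ne').congr_deriv ?_
  have hsq : √(1 - c ^ 2 * sin x ^ 2) ^ 2 = 1 - c ^ 2 * sin x ^ 2 := by
    rw [← mul_pow]; exact sq_sqrt hw.le
  field_simp
  rw [hsq]
  congr 1
  linear_combination c ^ 3 * sin x * sin_sq_add_cos_sq x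

end ArcsinMulSin

-- `sin (c θ) > c sin θ` for `θ = arcsin t ∈ (0, π/2]`, by strict concavity of `sin` on `[0, π]`.
lemma arcsin_mul_lt_mul_arcsin {c t : ℝ} (hc : c ∈ Set.Ioo 0 1) (ht₀ : 0 < t) (ht₁ : t ≤ 1) :
    arcsin (c * t) < c * arcsin t := by
  obtain ⟨hc₀, hc₁⟩ := hc
  have hθ₀ : 0 < arcsin t := arcsin_pos.2 ht₀
  have hθ : arcsin t ≤ π / 2 := arcsin_le_pi_div_two t
  have hsin : c * t < sin (c * arcsin t) := by
    have := strictConcaveOn_sin_Icc.2 (x := 0) (y := arcsin t) ⟨le_rfl, pi_pos.le⟩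
      ⟨hθ₀.le, by linarith [pi_pos]⟩ hθ₀.ne (sub_pos.2 hc₁) hc₀ (sub_add_cancel 1 c)
    simpa [sin_arcsin (by linarith) ht₁] using this
  refine (arcsin_lt_iff_lt_sin' ⟨?_, ?_⟩).2 hsin <;> nlinarith [pi_pos]

lemma arcsin_sin_le_self {x : ℝ} (hx : -(π / 2) ≤ x) : arcsin (sin x) ≤ x := by
  rcases le_total x (π / 2) with h | h
  · exact (arcsin_sin hx h).le
  · exact (arcsin_le_pi_div_two _).trans h

section SumArcsinMulSin

variable {ι : Type*} {s : Finset ι} {c : ι → ℝ}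

lemma deriv_sum_arcsin_mul_sin (hc : ∀ i ∈ s, |c i| < 1) :
    deriv (fun x => ∑ i ∈ s, arcsin (c i * sin x)) =
      fun x => ∑ i ∈ s, c i * cos x / √(1 - (c i * sin x) ^ 2) :=
  funext fun x => (HasDerivAt.fun_sum fun i hi => hasDerivAt_arcsin_mul_sin (hc i hi) x).deriv

lemma deriv_deriv_sum_arcsin_mul_sin (hc : ∀ i ∈ s, |c i| < 1) (x : ℝ) :
    deriv (deriv fun x => ∑ i ∈ s, arcsin (c i * sin x)) x =
      ∑ i ∈ s, c i * sin x * (c i ^ 2 - 1) / √(1 - (c i * sin x) ^ 2) ^ 3 := by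
  rw [deriv_sum_arcsin_mul_sin hc]
  exact (HasDerivAt.fun_sum fun i hi => hasDerivAt_mul_cos_div_sqrt (hc i hi) x).deriv

lemma deriv_deriv_sum_arcsin_mul_sin_neg (hs : s.Nonempty) (hc : ∀ i ∈ s, c i ∈ Set.Ioo 0 1)
    {x : ℝ} (hx : 0 < sin x) : deriv (deriv fun x => ∑ i ∈ s, arcsin (c i * sin x)) x < 0 := by
  have habs : ∀ i ∈ s, |c i| < 1 := fun i hi =>
    abs_lt.2 ⟨by linarith [(hc i hi).1], (hc i hi).2⟩
  rw [deriv_deriv_sum_arcsin_mul_sin habs]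
  refine sum_neg (fun i hi => div_neg_of_neg_of_pos ?_ ?_) hs
  · obtain ⟨h₀, h₁⟩ := hc i hi
    exact mul_neg_of_pos_of_neg (mul_pos h₀ hx) (by nlinarith)
  · exact pow_pos (sqrt_pos.2 (one_sub_mul_sin_sq_pos (habs i hi) x)) 3

lemma sum_arcsin_mul_sin_lt (hs : s.Nonempty) (hc : ∀ i ∈ s, c i ∈ Set.Ioo 0 1)
    (hsum : ∑ i ∈ s, c i ≤ 1) {x : ℝ} (hx : x ∈ Set.Ioc 0 π) :
    ∑ i ∈ s, arcsin (c i * sin x) < x := by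
  rcases (sin_nonneg_of_nonneg_of_le_pi hx.1.le hx.2).eq_or_lt with h | h
  · simpa [← h] using hx.1
  calc ∑ i ∈ s, arcsin (c i * sin x)
      < ∑ i ∈ s, c i * arcsin (sin x) :=
        sum_lt_sum_of_nonempty hs fun i hi => arcsin_mul_lt_mul_arcsin (hc i hi) h (sin_le_one x)
    _ = (∑ i ∈ s, c i) * arcsin (sin x) := (sum_mul ..).symm
    _ ≤ 1 * arcsin (sin x) := mul_le_mul_of_nonneg_right hsum (arcsin_nonneg.2 h.le)
    _ ≤ x := by rw [one_mul]; exact arcsin_sin_le_self (by linarith [hx.1, pi_pos])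

end SumArcsinMulSin

theorem fixed_point_function_concave_and_below_diagonal_general (N : ℕ) (hN : 2 < N)
    (α : ℕ → ℝ) (hα0 : 0 < α 0)
    (hreg : ∀ μ ∈ Finset.Ico 1 N, α 0 < |α μ|) :
    (∀ Ψ ∈ Set.Ioo (0 : ℝ) π,
      deriv (deriv (fun x : ℝ =>
        ∑ μ ∈ Finset.Ico 1 N, Real.arcsin ((α 0 / |α μ|) * Real.sin x))) Ψ < 0) ∧
    (α 0 ≤ (∑ μ ∈ Finset.Ico 1 N, |α μ|⁻¹)⁻¹ →
      ∀ Ψ ∈ Set.Ioc (0 : ℝ) π,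
        (∑ μ ∈ Finset.Ico 1 N, Real.arcsin ((α 0 / |α μ|) * Real.sin Ψ)) < Ψ) := by
  have hs : (Ico 1 N).Nonempty := ⟨1, mem_Ico.2 ⟨le_rfl, by omega⟩⟩
  have hpos : ∀ μ ∈ Ico 1 N, 0 < |α μ| := fun μ hμ => hα0.trans (hreg μ hμ)
  have hc : ∀ μ ∈ Ico 1 N, α 0 / |α μ| ∈ Set.Ioo 0 1 := fun μ hμ =>
    ⟨div_pos hα0 (hpos μ hμ), (div_lt_one (hpos μ hμ)).2 (hreg μ hμ)⟩
  refine ⟨fun Ψ hΨ =>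
    deriv_deriv_sum_arcsin_mul_sin_neg hs hc (sin_pos_of_pos_of_lt_pi hΨ.1 hΨ.2),
    fun hcrit Ψ hΨ => sum_arcsin_mul_sin_lt hs hc ?_ hΨ⟩
  have hS : 0 < ∑ μ ∈ Ico 1 N, |α μ|⁻¹ := sum_pos (fun μ hμ => inv_pos.2 (hpos μ hμ)) hs
  simp_rw [div_eq_mul_inv, ← mul_sum]
  exact (le_inv_mul_iff₀' hS).1 (by rwa [mul_one])

/-- In the regular domain `0 < α₀ < |α_τ|` the fixed point function
`f(Ψ) = Σ_{μ=1}^{N−1} arcsin((α₀/|α_μ|) sin Ψ)` has strictly negative second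
derivative on `(0, π)`; and if moreover `α₀ ≤ α_(c) := (Σ |α_μ|⁻¹)⁻¹`, then
`f(Ψ) < Ψ` for all `Ψ ∈ (0, π]`. -/
theorem fixed_point_function_concave_and_below_diagonal (N : ℕ) (hN : 2 < N)
    (α : ℕ → ℝ) (hα0 : 0 < α 0) (hαμ : ∀ μ ∈ Finset.Ico 1 N, α μ < 0)
    (hreg : ∀ μ ∈ Finset.Ico 1 N, α 0 < |α μ|) :
    (∀ Ψ ∈ Set.Ioo (0 : ℝ) π,
      deriv (deriv (fun x : ℝ =>
        ∑ μ ∈ Finset.Ico 1 N, Real.arcsin ((α 0 / |α μ|) * Real.sin x))) Ψ < 0) ∧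
    (α 0 ≤ (∑ μ ∈ Finset.Ico 1 N, |α μ|⁻¹)⁻¹ →
      ∀ Ψ ∈ Set.Ioc (0 : ℝ) π,
        (∑ μ ∈ Finset.Ico 1 N, Real.arcsin ((α 0 / |α μ|) * Real.sin Ψ)) < Ψ) :=
  fixed_point_function_concave_and_below_diagonal_general N hN α hα0 hreg
end

section
/- With |α_τ| := min_{0<μ<N} |α_μ| and α_(c) := (Σ_{μ=1}^{N−1} |α_μ|^{−1})^{−1}, for each α_0 ∈ (α_(c), |α_τ|) let Ψ(α_0) denote the unique solution in (0, π) of Ψ = Σ_{μ=1}^{N−1} arcsin((α_0/|α_μ|) sin Ψ). Then the function α_0 ↦ Ψ(α_0) is real-analytic on the open interval (α_(c), |α_τ|). -/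
/-!
Ψ(α₀) is a zero of `F(a, y) = y - Σ_μ arcsin((a / |α_μ|) sin y)`, which is analytic wherever every
argument of `arcsin` lies in `(-1, 1)`. By the analytic implicit function theorem, the zero set of
`F` near `(α₀, Ψ(α₀))` is the graph of an analytic function as soon as `∂F/∂y ≠ 0` there, and by
uniqueness of the solution in `(0, π)` that function coincides with `Ψ` near `α₀`.

For `0 < c < 1`, the summand `g(y) = arcsin(c sin y)` satisfies `y g'(y) < g(y)` on `(0, π)`: with
`u = g(y)` one has `sin u = c sin y` and `0 < u < y`, and the inequality becomes the monotonicity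
of `t cot t` on `(0, π/2)`. Summing at a fixed point gives `Σ_μ g_μ'(Ψ) < Σ_μ g_μ(Ψ) / Ψ = 1`,
i.e. `∂F/∂y > 0`.
-/

open Real Finset Filter Topology
open scoped ContDiff

theorem AnalyticAt.exists_implicitFunction {𝕜 : Type*} [RCLike 𝕜]
    {E₁ E₂ F : Type*} [NormedAddCommGroup E₁] [NormedSpace 𝕜 E₁] [CompleteSpace E₁]
    [NormedAddCommGroup E₂] [NormedSpace 𝕜 E₂] [CompleteSpace E₂]
    [NormedAddCommGroup F] [NormedSpace 𝕜 F] [CompleteSpace F]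
    {f : E₁ × E₂ → F} {u : E₁ × E₂} (hf : AnalyticAt 𝕜 f u)
    (hf₂ : (fderiv 𝕜 f u ∘L .inr 𝕜 E₁ E₂).IsInvertible) :
    ∃ ψ : E₁ → E₂, AnalyticAt 𝕜 ψ u.1 ∧ ψ u.1 = u.2 ∧ ∀ᶠ x in 𝓝 u.1, f (x, ψ x) = f u := by
  have cdf : ContDiffAt 𝕜 ω f u := hf.contDiffAt
  exact ⟨cdf.implicitFunction (by simp) hf₂, (cdf.contDiffAt_implicitFunction _ hf₂).analyticAt,
    cdf.implicitFunction_apply_self _ hf₂, cdf.eventually_apply_implicitFunction _ hf₂⟩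

theorem ContinuousLinearMap.isInvertible_of_apply_one_ne_zero {𝕜 : Type*}
    [NontriviallyNormedField 𝕜] {L : 𝕜 →L[𝕜] 𝕜} (h : L 1 ≠ 0) : L.IsInvertible :=
  ⟨.unitsEquivAut 𝕜 (.mk0 _ h), by ext; simp⟩

theorem fderiv_comp_inr_apply_one {𝕜 : Type*} [NontriviallyNormedField 𝕜]
    {E F : Type*} [NormedAddCommGroup E] [NormedSpace 𝕜 E] [NormedAddCommGroup F]
    [NormedSpace 𝕜 F] {f : E × 𝕜 → F} {u : E × 𝕜} (hf : DifferentiableAt 𝕜 f u) :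
    (fderiv 𝕜 f u ∘L .inr 𝕜 E 𝕜) 1 = deriv (fun y => f (u.1, y)) u.2 := by
  have hu : HasDerivAt (fun y : 𝕜 => (u.1, y)) (0, 1) u.2 :=
    (hasDerivAt_const u.2 u.1).prodMk (hasDerivAt_id u.2)
  exact ((hf.hasFDerivAt.comp_hasDerivAt_of_eq u.2 hu rfl).deriv).symm

theorem AnalyticAt.exists_implicitFunction_of_deriv_ne_zero {𝕜 : Type*} [RCLike 𝕜]
    {E : Type*} [NormedAddCommGroup E] [NormedSpace 𝕜 E] [CompleteSpace E]
    {f : E × 𝕜 → 𝕜} {u : E × 𝕜} (hf : AnalyticAt 𝕜 f u)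
    (hf₂ : deriv (fun y => f (u.1, y)) u.2 ≠ 0) :
    ∃ ψ : E → 𝕜, AnalyticAt 𝕜 ψ u.1 ∧ ψ u.1 = u.2 ∧ ∀ᶠ x in 𝓝 u.1, f (x, ψ x) = f u :=
  hf.exists_implicitFunction <| ContinuousLinearMap.isInvertible_of_apply_one_ne_zero <| by
    rwa [fderiv_comp_inr_apply_one hf.differentiableAt]

namespace Real

theorem analyticAt_arcsin {x : ℝ} (hx : x ∈ Set.Ioo (-1) 1) : AnalyticAt ℝ arcsin x :=
  (contDiffAt_arcsin hx.1.ne' hx.2.ne (n := ω)).analyticAt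

theorem strictAntiOn_mul_cos_div_sin :
    StrictAntiOn (fun t => t * cos t / sin t) (Set.Ioo 0 (π / 2)) := by
  have hsin : ∀ t ∈ Set.Ioo 0 (π / 2), 0 < sin t := fun t ht =>
    sin_pos_of_pos_of_lt_pi ht.1 (by linarith [ht.2, pi_pos])
  have hderiv : ∀ t ∈ Set.Ioo 0 (π / 2),
      HasDerivAt (fun t => t * cos t / sin t) ((sin t * cos t - t) / sin t ^ 2) t := by
    intro t ht
    refine (((hasDerivAt_id' t).fun_mul (hasDerivAt_cos t)).fun_div (hasDerivAt_sin t)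
      (hsin t ht).ne').congr_deriv ?_
    congr 1
    linear_combination -t * sin_sq_add_cos_sq t
  refine strictAntiOn_of_hasDerivWithinAt_neg (convex_Ioo _ _)
    (fun t ht => (hderiv t ht).continuousAt.continuousWithinAt)
    (fun t ht => (hderiv t (interior_subset ht)).hasDerivWithinAt) fun t ht => ?_
  rw [interior_Ioo] at ht
  have : sin t * cos t < t :=
    calc sin t * cos t ≤ sin t := mul_le_of_le_one_right (hsin t ht).le (cos_le_one t)
      _ < t := sin_lt ht.1
  exact div_neg_of_neg_of_pos (by linarith) (pow_pos (hsin t ht) 2)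

theorem mul_sin_mem_Ioo {c y : ℝ} (hc : c ∈ Set.Ioo 0 1) (hy : y ∈ Set.Ioo 0 π) :
    c * sin y ∈ Set.Ioo 0 1 := by
  have hsin : 0 < sin y := sin_pos_of_pos_of_lt_pi hy.1 hy.2
  exact ⟨mul_pos hc.1 hsin, (mul_lt_of_lt_one_left hsin hc.2).trans_le (sin_le_one y)⟩

theorem mul_mul_cos_div_sqrt_lt_arcsin_mul_sin {c y : ℝ} (hc : c ∈ Set.Ioo 0 1)
    (hy : y ∈ Set.Ioo 0 π) : y * (c * cos y / √(1 - (c * sin y) ^ 2)) < arcsin (c * sin y) := by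
  set u := arcsin (c * sin y)
  have hsin : 0 < sin y := sin_pos_of_pos_of_lt_pi hy.1 hy.2
  have hcsin : c * sin y < sin y := mul_lt_of_lt_one_left hsin hc.2
  have hcsin_mem := mul_sin_mem_Ioo hc hy
  have hu_pos : 0 < u := arcsin_pos.2 hcsin_mem.1
  rcases le_or_gt (cos y) 0 with hcos | hcos
  · have : c * cos y / √(1 - (c * sin y) ^ 2) ≤ 0 :=
      div_nonpos_of_nonpos_of_nonneg (mul_nonpos_of_nonneg_of_nonpos hc.1.le hcos) (sqrt_nonneg _)
    exact (mul_nonpos_of_nonneg_of_nonpos hy.1.le this).trans_lt hu_pos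
  have hy_lt : y < π / 2 := by
    by_contra! h
    exact hcos.not_ge (cos_nonpos_of_pi_div_two_le_of_le h (by linarith [hy.2, pi_pos]))
  have hsin_u : sin u = c * sin y := sin_arcsin (by linarith [hcsin_mem.1]) hcsin_mem.2.le
  have hu_lt : u < y := (arcsin_lt_iff_lt_sin' ⟨by linarith [hy.1, pi_pos], hy_lt.le⟩).2 hcsin
  have hcos_u : 0 < cos u := cos_pos_of_mem_Ioo ⟨by linarith, hu_lt.trans hy_lt⟩
  have hanti := strictAntiOn_mul_cos_div_sin ⟨hu_pos, hu_lt.trans hy_lt⟩ ⟨hy.1, hy_lt⟩ hu_lt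
  rw [div_lt_div_iff₀ hsin (hsin_u ▸ hcsin_mem.1)] at hanti
  rw [← cos_arcsin, mul_div_assoc', div_lt_iff₀ hcos_u]
  refine lt_of_mul_lt_mul_right ?_ hsin.le
  calc y * (c * cos y) * sin y = y * cos y * sin u := by rw [hsin_u]; ring
    _ < u * cos u * sin y := hanti

end Real

section ArcsinSum

variable {ι : Type*} {s : Finset ι}

theorem sum_mul_cos_div_sqrt_lt_one_of_eq_sum_arcsin {c : ι → ℝ}
    (hc : ∀ i ∈ s, c i ∈ Set.Ioo 0 1) {y : ℝ} (hy : y ∈ Set.Ioo 0 π)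
    (hfix : y = ∑ i ∈ s, arcsin (c i * sin y)) :
    ∑ i ∈ s, c i * cos y / √(1 - (c i * sin y) ^ 2) < 1 := by
  have hs : s.Nonempty := Finset.nonempty_of_sum_ne_zero (hfix ▸ hy.1.ne')
  refine lt_of_mul_lt_mul_left ?_ hy.1.le
  calc y * ∑ i ∈ s, c i * cos y / √(1 - (c i * sin y) ^ 2)
      = ∑ i ∈ s, y * (c i * cos y / √(1 - (c i * sin y) ^ 2)) := mul_sum _ _ _
    _ < ∑ i ∈ s, arcsin (c i * sin y) :=
      sum_lt_sum_of_nonempty hs fun i hi => mul_mul_cos_div_sqrt_lt_arcsin_mul_sin (hc i hi) hy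
    _ = y * 1 := by rw [mul_one, ← hfix]

theorem hasDerivAt_sub_sum_arcsin_mul_sin {c : ι → ℝ} {y : ℝ}
    (h : ∀ i ∈ s, c i * sin y ∈ Set.Ioo (-1) 1) :
    HasDerivAt (fun y => y - ∑ i ∈ s, arcsin (c i * sin y))
      (1 - ∑ i ∈ s, c i * cos y / √(1 - (c i * sin y) ^ 2)) y := by
  refine (hasDerivAt_id' y).sub (HasDerivAt.fun_sum fun i hi => ?_)
  refine ((hasDerivAt_arcsin (h i hi).1.ne' (h i hi).2.ne).comp y
    ((hasDerivAt_sin y).const_mul (c i))).congr_deriv ?_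
  ring

theorem analyticAt_sub_sum_arcsin_div_mul_sin {r : ι → ℝ} {p : ℝ × ℝ}
    (h : ∀ i ∈ s, p.1 / r i * sin p.2 ∈ Set.Ioo (-1) 1) :
    AnalyticAt ℝ (fun p : ℝ × ℝ => p.2 - ∑ i ∈ s, arcsin (p.1 / r i * sin p.2)) p :=
  analyticAt_snd.sub <| Finset.analyticAt_fun_sum _ fun i hi =>
    (analyticAt_arcsin (h i hi)).comp (f := fun p : ℝ × ℝ => p.1 / r i * sin p.2)
      (analyticAt_fst.div_const.fun_mul (analyticAt_sin.comp analyticAt_snd))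

end ArcsinSum

theorem fixed_point_analytic_in_alpha0_general (N : ℕ)
    (α : ℕ → ℝ)
    (τ : ℕ)
    (hτmin : ∀ μ ∈ Finset.Ico 1 N, |α τ| ≤ |α μ|)
    (Ψfun : ℝ → ℝ)
    (hΨ : ∀ a ∈ Set.Ioo ((∑ μ ∈ Finset.Ico 1 N, |α μ|⁻¹)⁻¹) |α τ|,
      Ψfun a ∈ Set.Ioo (0 : ℝ) π ∧
      Ψfun a = ∑ μ ∈ Finset.Ico 1 N, Real.arcsin ((a / |α μ|) * Real.sin (Ψfun a)))
    (huniq : ∀ a ∈ Set.Ioo ((∑ μ ∈ Finset.Ico 1 N, |α μ|⁻¹)⁻¹) |α τ|,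
      ∀ y ∈ Set.Ioo (0 : ℝ) π,
        y = ∑ μ ∈ Finset.Ico 1 N, Real.arcsin ((a / |α μ|) * Real.sin y) → y = Ψfun a) :
    AnalyticOnNhd ℝ Ψfun (Set.Ioo ((∑ μ ∈ Finset.Ico 1 N, |α μ|⁻¹)⁻¹) |α τ|) := by
  intro a₀ ha₀
  have hratio : ∀ μ ∈ Ico 1 N, a₀ / |α μ| ∈ Set.Ioo 0 1 := by
    intro μ hμ
    have ha₀_pos : 0 < a₀ :=
      (inv_nonneg.2 (sum_nonneg fun _ _ => inv_nonneg.2 (abs_nonneg _))).trans_lt ha₀.1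
    have ha₀_lt : a₀ < |α μ| := ha₀.2.trans_le (hτmin μ hμ)
    exact ⟨div_pos ha₀_pos (ha₀_pos.trans ha₀_lt), (div_lt_one (ha₀_pos.trans ha₀_lt)).2 ha₀_lt⟩
  obtain ⟨hΨ₀, hfix⟩ := hΨ a₀ ha₀
  have hsmall : ∀ μ ∈ Ico 1 N, a₀ / |α μ| * sin (Ψfun a₀) ∈ Set.Ioo (-1) 1 := fun μ hμ =>
    Set.Ioo_subset_Ioo_left (by norm_num) (mul_sin_mem_Ioo (hratio μ hμ) hΨ₀)
  have hderiv_pos := sub_pos.2 (sum_mul_cos_div_sqrt_lt_one_of_eq_sum_arcsin hratio hΨ₀ hfix)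
  have hF := analyticAt_sub_sum_arcsin_div_mul_sin (p := (a₀, Ψfun a₀)) hsmall
  obtain ⟨ψ, hψ, hψa₀, hψ_zero⟩ := hF.exists_implicitFunction_of_deriv_ne_zero
    (by rw [(hasDerivAt_sub_sum_arcsin_mul_sin hsmall).deriv]; exact hderiv_pos.ne')
  have hψ_mem : ∀ᶠ a in 𝓝 a₀, ψ a ∈ Set.Ioo 0 π :=
    hψ.continuousAt.preimage_mem_nhds (hψa₀ ▸ isOpen_Ioo.mem_nhds hΨ₀)
  refine hψ.congr ?_
  filter_upwards [hψ_zero, hψ_mem, isOpen_Ioo.mem_nhds ha₀] with a hψa hmem ha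
  exact huniq a ha (ψ a) hmem (sub_eq_zero.1 (hψa.trans (sub_eq_zero.2 hfix)))

/-- The function `α₀ ↦ Ψ(α₀)`, where `Ψ(α₀)` is the unique solution in `(0, π)` of
`Ψ = Σ_{μ=1}^{N−1} arcsin((α₀/|α_μ|) sin Ψ)`, is real-analytic on the open
interval `(α_(c), |α_τ|)`. -/
theorem fixed_point_analytic_in_alpha0 (N : ℕ) (hN : 2 < N)
    (α : ℕ → ℝ) (hαμ : ∀ μ ∈ Finset.Ico 1 N, α μ < 0)
    (τ : ℕ) (hτ : τ ∈ Finset.Ico 1 N)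
    (hτmin : ∀ μ ∈ Finset.Ico 1 N, |α τ| ≤ |α μ|)
    (Ψfun : ℝ → ℝ)
    (hΨ : ∀ a ∈ Set.Ioo ((∑ μ ∈ Finset.Ico 1 N, |α μ|⁻¹)⁻¹) |α τ|,
      Ψfun a ∈ Set.Ioo (0 : ℝ) π ∧
      Ψfun a = ∑ μ ∈ Finset.Ico 1 N, Real.arcsin ((a / |α μ|) * Real.sin (Ψfun a)))
    (huniq : ∀ a ∈ Set.Ioo ((∑ μ ∈ Finset.Ico 1 N, |α μ|⁻¹)⁻¹) |α τ|,
      ∀ y ∈ Set.Ioo (0 : ℝ) π,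
        y = ∑ μ ∈ Finset.Ico 1 N, Real.arcsin ((a / |α μ|) * Real.sin y) → y = Ψfun a) :
    AnalyticOnNhd ℝ Ψfun (Set.Ioo ((∑ μ ∈ Finset.Ico 1 N, |α μ|⁻¹)⁻¹) |α τ|) :=
  fixed_point_analytic_in_alpha0_general N α τ hτmin Ψfun hΨ huniq
end

section
/- Let N > 3, let α_μ < 0 for 0 < μ < N, fix τ with |α_τ| = min_{0<μ<N} |α_μ|, and let |α_σ| := min_{0<μ<N, μ≠τ} |α_μ| be the second weakest ferromagnetic bond strength. Define α_(d) := (Σ_{μ=1, μ≠τ}^{N−1} |α_μ|^{−1})^{−1} and g(x) := Σ_{μ=1, μ≠τ}^{N−1} arcsin(x/|α_μ|). Then the equation g(x) = π/2 has a unique solution α_(d') in (0, |α_σ|), and 0 < α_(d) < α_(d') < |α_σ|. -/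
open Real Finset

/-!
The function `g x = ∑_{μ ≠ τ} arcsin (x / |α_μ|)` is continuous and strictly increasing on
`[0, |α_σ|]`, vanishes at `0`, and exceeds `π / 2` at `|α_σ|`, since the `σ`-term alone is already
`arcsin 1 = π / 2` and at least one other term is positive; hence `g = π / 2` has exactly one
root there. Jordan's inequality `2 / π * t < sin t` on `(0, π / 2)` gives the chord bound
`arcsin y < π / 2 * y` on `(0, 1)`, so at the root `π / 2 < π / 2 * x * ∑ |α_μ|⁻¹`, i.e. the
harmonic-type mean `α_(d)` lies below it.
-/

theorem Real.arcsin_lt_pi_div_two_mul {y : ℝ} (h₀ : 0 < y) (h₁ : y < 1) :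
    arcsin y < π / 2 * y := by
  have hpos : 0 < π / 2 * y := by positivity
  have hlt : π / 2 * y < π / 2 := mul_lt_of_lt_one_right (by positivity) h₁
  rw [arcsin_lt_iff_lt_sin' ⟨by linarith, hlt.le⟩]
  calc y = 2 / π * (π / 2 * y) := by field_simp
    _ < sin (π / 2 * y) := mul_lt_sin hpos hlt

section ArcsinSum

variable {ι : Type*} (s : Finset ι) (c : ι → ℝ)

noncomputable def arcsinSum (x : ℝ) : ℝ := ∑ μ ∈ s, arcsin (x / c μ)

variable {s c}

theorem continuous_arcsinSum : Continuous (arcsinSum s c) :=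
  continuous_finsetSum _ fun _ _ => continuous_arcsin.comp (continuous_id.div_const _)

@[simp]
theorem arcsinSum_zero : arcsinSum s c 0 = 0 := by
  simp [arcsinSum]

theorem strictMonoOn_arcsinSum (hc : ∀ μ ∈ s, 0 < c μ) {σ : ι} (hσ : σ ∈ s) :
    StrictMonoOn (arcsinSum s c) (Set.Icc 0 (c σ)) := by
  intro a ha b hb hab
  have hcσ := hc σ hσ
  refine Finset.sum_lt_sum (fun μ hμ => monotone_arcsin ?_) ⟨σ, hσ, ?_⟩
  · exact div_le_div_of_nonneg_right hab.le (hc μ hμ).le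
  · have hmem : ∀ x ∈ Set.Icc 0 (c σ), x / c σ ∈ Set.Icc (-1 : ℝ) 1 := fun x hx =>
      ⟨by linarith [div_nonneg hx.1 hcσ.le], (div_le_one hcσ).2 hx.2⟩
    exact strictMonoOn_arcsin (hmem a ha) (hmem b hb) (div_lt_div_of_pos_right hab hcσ)

theorem pi_div_two_lt_arcsinSum (hc : ∀ μ ∈ s, 0 < c μ) (hs : 1 < #s) {σ : ι} (hσ : σ ∈ s) :
    π / 2 < arcsinSum s c (c σ) := by
  classical
  have hne : (s.erase σ).Nonempty := by
    rw [← card_pos, card_erase_of_mem hσ]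
    omega
  have hrest : 0 < ∑ μ ∈ s.erase σ, arcsin (c σ / c μ) :=
    Finset.sum_pos (fun μ hμ => arcsin_pos.2 (div_pos (hc σ hσ) (hc μ (mem_of_mem_erase hμ))))
      hne
  rw [arcsinSum, ← Finset.add_sum_erase s _ hσ, div_self (hc σ hσ).ne', arcsin_one]
  linarith

theorem existsUnique_arcsinSum_eq_pi_div_two (hc : ∀ μ ∈ s, 0 < c μ) (hs : 1 < #s) {σ : ι}
    (hσ : σ ∈ s) :
    ∃! x : ℝ, x ∈ Set.Ioo 0 (c σ) ∧ arcsinSum s c x = π / 2 := by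
  have hmem : π / 2 ∈ Set.Ioo (arcsinSum s c 0) (arcsinSum s c (c σ)) :=
    ⟨by simpa using pi_div_two_pos, pi_div_two_lt_arcsinSum hc hs hσ⟩
  obtain ⟨x, hx, hgx⟩ :=
    intermediate_value_Ioo (hc σ hσ).le continuous_arcsinSum.continuousOn hmem
  refine ⟨x, ⟨hx, hgx⟩, fun y ⟨hy, hgy⟩ => ?_⟩
  exact (strictMonoOn_arcsinSum hc hσ).injOn (Set.Ioo_subset_Icc_self hy)
    (Set.Ioo_subset_Icc_self hx) (hgy.trans hgx.symm)

theorem arcsinSum_lt (hs : s.Nonempty) {x : ℝ} (hx : 0 < x) (hxc : ∀ μ ∈ s, x < c μ) :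
    arcsinSum s c x < π / 2 * (x * ∑ μ ∈ s, (c μ)⁻¹) := by
  calc arcsinSum s c x < ∑ μ ∈ s, π / 2 * (x / c μ) := by
        refine Finset.sum_lt_sum_of_nonempty hs fun μ hμ => ?_
        have hcμ : 0 < c μ := hx.trans (hxc μ hμ)
        exact arcsin_lt_pi_div_two_mul (div_pos hx hcμ) ((div_lt_one hcμ).2 (hxc μ hμ))
    _ = π / 2 * (x * ∑ μ ∈ s, (c μ)⁻¹) := by
        simp only [Finset.mul_sum, div_eq_mul_inv, mul_assoc]

theorem inv_sum_inv_lt_of_arcsinSum_eq (hs : s.Nonempty) {x : ℝ} (hx : 0 < x)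
    (hxc : ∀ μ ∈ s, x < c μ) (hgx : arcsinSum s c x = π / 2) :
    0 < (∑ μ ∈ s, (c μ)⁻¹)⁻¹ ∧ (∑ μ ∈ s, (c μ)⁻¹)⁻¹ < x := by
  have hS : 0 < ∑ μ ∈ s, (c μ)⁻¹ :=
    Finset.sum_pos (fun μ hμ => inv_pos.2 (hx.trans (hxc μ hμ))) hs
  have hlt := arcsinSum_lt hs hx hxc
  rw [hgx] at hlt
  have hone : 1 < x * ∑ μ ∈ s, (c μ)⁻¹ :=
    lt_of_mul_lt_mul_left (by simpa using hlt) pi_div_two_pos.le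
  refine ⟨inv_pos.2 hS, ?_⟩
  rwa [inv_lt_iff_one_lt_mul₀ hS]

end ArcsinSum

theorem dprime_exists_unique_between_general (N : ℕ) (hN : 3 < N)
    (α : ℕ → ℝ) (hαμ : ∀ μ ∈ Finset.Ico 1 N, α μ < 0)
    (τ : ℕ) (hτ : τ ∈ Finset.Ico 1 N)
    (σ : ℕ) (hσ : σ ∈ (Finset.Ico 1 N).erase τ)
    (hσmin : ∀ μ ∈ (Finset.Ico 1 N).erase τ, |α σ| ≤ |α μ|) :
    (∃! x : ℝ, x ∈ Set.Ioo (0 : ℝ) |α σ| ∧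
      (∑ μ ∈ (Finset.Ico 1 N).erase τ, Real.arcsin (x / |α μ|)) = π / 2) ∧
    (∀ x ∈ Set.Ioo (0 : ℝ) |α σ|,
      (∑ μ ∈ (Finset.Ico 1 N).erase τ, Real.arcsin (x / |α μ|)) = π / 2 →
      0 < (∑ μ ∈ (Finset.Ico 1 N).erase τ, |α μ|⁻¹)⁻¹ ∧
      (∑ μ ∈ (Finset.Ico 1 N).erase τ, |α μ|⁻¹)⁻¹ < x) := by
  set s := (Finset.Ico 1 N).erase τ
  have hc : ∀ μ ∈ s, 0 < |α μ| := fun μ hμ => abs_pos.2 (hαμ μ (mem_of_mem_erase hμ)).ne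
  have hs : 1 < #s := by
    rw [card_erase_of_mem hτ, Nat.card_Ico]
    omega
  refine ⟨existsUnique_arcsinSum_eq_pi_div_two hc hs hσ, fun x hx hgx => ?_⟩
  exact inv_sum_inv_lt_of_arcsinSum_eq ⟨σ, hσ⟩ hx.1
    (fun μ hμ => hx.2.trans_le (hσmin μ hμ)) hgx

/-- For `N > 3`, with `|α_σ|` the second weakest ferromagnetic bond strength and
`g(x) := Σ_{μ≠τ} arcsin(x/|α_μ|)`, the equation `g(x) = π/2` has a unique solution
`α_(d')` in `(0, |α_σ|)`, and `0 < α_(d) < α_(d') < |α_σ|` where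
`α_(d) := (Σ_{μ≠τ} |α_μ|⁻¹)⁻¹`. -/
theorem dprime_exists_unique_between (N : ℕ) (hN : 3 < N)
    (α : ℕ → ℝ) (hαμ : ∀ μ ∈ Finset.Ico 1 N, α μ < 0)
    (τ : ℕ) (hτ : τ ∈ Finset.Ico 1 N)
    (hτmin : ∀ μ ∈ Finset.Ico 1 N, |α τ| ≤ |α μ|)
    (σ : ℕ) (hσ : σ ∈ (Finset.Ico 1 N).erase τ)
    (hσmin : ∀ μ ∈ (Finset.Ico 1 N).erase τ, |α σ| ≤ |α μ|) :
    (∃! x : ℝ, x ∈ Set.Ioo (0 : ℝ) |α σ| ∧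
      (∑ μ ∈ (Finset.Ico 1 N).erase τ, Real.arcsin (x / |α μ|)) = π / 2) ∧
    (∀ x ∈ Set.Ioo (0 : ℝ) |α σ|,
      (∑ μ ∈ (Finset.Ico 1 N).erase τ, Real.arcsin (x / |α μ|)) = π / 2 →
      0 < (∑ μ ∈ (Finset.Ico 1 N).erase τ, |α μ|⁻¹)⁻¹ ∧
      (∑ μ ∈ (Finset.Ico 1 N).erase τ, |α μ|⁻¹)⁻¹ < x) :=
  dprime_exists_unique_between_general N hN α hαμ τ hτ σ hσ hσmin
end

section
/- Let N > 2, let α_μ < 0 for 0 < μ < N, set |α_τ| := min_{0<μ<N} |α_μ|, and put α_0 = |α_τ| (the limit point between the regular and complementary domains). Then the global minimum of the energy E(ψ_1, …, ψ_{N−1}) = α_0 cos(Σ_{μ=1}^{N−1} ψ_μ) + Σ_{μ=1}^{N−1} α_μ cos ψ_μ over all tuples is strictly less than |α_τ| − Σ_{μ=1}^{N−1} |α_μ|, the common energy of the two optimal collinear configurations; hence the LEC at α_0 = |α_τ| is coplanar, not collinear. -/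
open Real Finset

set_option maxHeartbeats 1000000

/-- At the limit point `α₀ = |α_τ|` the global minimum of the energy is strictly
below `|α_τ| − Σ_{μ=1}^{N−1} |α_μ|`, the common energy of the two optimal
collinear configurations; hence every LEC at `α₀ = |α_τ|` is coplanar. -/
theorem limit_point_lec_coplanar (N : ℕ) (hN : 2 < N)
    (α : ℕ → ℝ) (hαμ : ∀ μ ∈ Finset.Ico 1 N, α μ < 0)
    (τ : ℕ) (hτ : τ ∈ Finset.Ico 1 N)
    (hτmin : ∀ μ ∈ Finset.Ico 1 N, |α τ| ≤ |α μ|)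
    (hα0 : α 0 = |α τ|) :
    (∃ ψ : ℕ → ℝ, (∀ μ ∈ Finset.Ico 1 N, ψ μ ∈ Set.Ioc (-π) π) ∧
      polygonEnergy N α ψ < |α τ| - ∑ μ ∈ Finset.Ico 1 N, |α μ|) ∧
    (∀ ψ : ℕ → ℝ, (∀ μ ∈ Finset.Ico 1 N, ψ μ ∈ Set.Ioc (-π) π) →
      (∀ φ : ℕ → ℝ, (∀ μ ∈ Finset.Ico 1 N, φ μ ∈ Set.Ioc (-π) π) →
        polygonEnergy N α ψ ≤ polygonEnergy N α φ) →
      ¬ (∀ μ ∈ Finset.Ico 1 N, ψ μ = 0 ∨ ψ μ = π)) := by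
  have hπ := Real.pi_pos
  set S := Finset.Ico 1 N with hS
  have hcard : 1 < S.card := by
    rw [hS, Nat.card_Ico]; omega
  obtain ⟨σ, hσS, hστ⟩ := Finset.exists_mem_ne hcard τ
  have hατ := hαμ τ hτ
  have hασ := hαμ σ hσS
  set a := |α τ| with ha_def
  set b := |α σ| with hb_def
  have ha : 0 < a := abs_pos.2 hατ.ne
  have hb : 0 < b := abs_pos.2 hασ.ne
  have hab : a ≤ b := hτmin σ hσS
  have haτ : α τ = -a := by rw [ha_def, abs_of_neg hατ, neg_neg]
  have haσ : α σ = -b := by rw [hb_def, abs_of_neg hασ, neg_neg]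
  -- the witness angle
  set c := a / (2 * b) with hc_def
  have hc0 : 0 < c := by positivity
  have hc1 : c ≤ 1 := by
    rw [hc_def, div_le_one (by positivity)]; linarith
  have hbc : 2 * b * c = a := by
    rw [hc_def]; field_simp
  set t := Real.arccos c with ht_def
  have hcost : Real.cos t = c := Real.cos_arccos (by linarith) hc1
  have ht0 : 0 ≤ t := Real.arccos_nonneg _
  have htπ : t < π := by
    refine lt_of_le_of_ne (Real.arccos_le_pi _) fun h => ?_
    rw [ht_def] at h
    rw [ht_def, h, Real.cos_pi] at hcost
    linarith
  set ψ0 : ℕ → ℝ := fun μ => if μ = τ then t else if μ = σ then π - 2 * t else 0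
    with hψ0
  have hσ' : σ ∈ S.erase τ := Finset.mem_erase.2 ⟨hστ, hσS⟩
  have key : ∀ f : ℕ → ℝ, ∑ μ ∈ S, f μ
      = f τ + (f σ + ∑ μ ∈ (S.erase τ).erase σ, f μ) := by
    intro f
    rw [← Finset.add_sum_erase S f hτ, ← Finset.add_sum_erase _ f hσ']
  have hrest : ∀ μ ∈ (S.erase τ).erase σ, μ ≠ τ ∧ μ ≠ σ ∧ μ ∈ S := by
    intro μ hμ
    have h1 := Finset.mem_erase.1 hμ
    have h2 := Finset.mem_erase.1 h1.2
    exact ⟨h2.1, h1.1, h2.2⟩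
  have hψ0τ : ψ0 τ = t := by simp [hψ0]
  have hψ0σ : ψ0 σ = π - 2 * t := by simp [hψ0, hστ]
  have hψ0rest : ∀ μ ∈ (S.erase τ).erase σ, ψ0 μ = 0 := by
    intro μ hμ
    obtain ⟨h1, h2, _⟩ := hrest μ hμ
    simp [hψ0, h1, h2]
  -- range of the witness
  have hrange0 : ∀ μ ∈ S, ψ0 μ ∈ Set.Ioc (-π) π := by
    intro μ hμ
    rcases eq_or_ne μ τ with rfl | h1
    · rw [hψ0τ]; constructor <;> [linarith; linarith]
    rcases eq_or_ne μ σ with rfl | h2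
    · rw [hψ0σ]; constructor <;> [linarith; linarith]
    · simp only [hψ0, h1, h2, if_false]
      constructor <;> [linarith; linarith]
  -- sums for the witness
  have hΨ : ∑ μ ∈ S, ψ0 μ = π - t := by
    rw [key ψ0, hψ0τ, hψ0σ, Finset.sum_eq_zero hψ0rest]; ring
  have hEsum : ∑ μ ∈ S, α μ * Real.cos (ψ0 μ)
      = α τ * Real.cos t + (α σ * Real.cos (π - 2 * t)
        + ∑ μ ∈ (S.erase τ).erase σ, α μ) := by
    rw [key (fun μ => α μ * Real.cos (ψ0 μ)), hψ0τ, hψ0σ]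
    congr 2
    refine Finset.sum_congr rfl fun μ hμ => ?_
    rw [hψ0rest μ hμ, Real.cos_zero, mul_one]
  set Rneg := ∑ μ ∈ (S.erase τ).erase σ, α μ with hRneg
  set Rabs := ∑ μ ∈ (S.erase τ).erase σ, |α μ| with hRabs
  have hRR : Rneg + Rabs = 0 := by
    rw [hRneg, hRabs, ← Finset.sum_add_distrib]
    refine Finset.sum_eq_zero fun μ hμ => ?_
    rw [abs_of_neg (hαμ μ (hrest μ hμ).2.2)]; ring
  have hAbs : ∑ μ ∈ S, |α μ| = a + (b + Rabs) := key (fun μ => |α μ|)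
  -- energy of the witness
  have hElt : polygonEnergy N α ψ0 < a - ∑ μ ∈ S, |α μ| := by
    have hc1' : Real.cos (π - t) = -c := by rw [Real.cos_pi_sub, hcost]
    have hc2' : Real.cos (π - 2 * t) = -(2 * c ^ 2 - 1) := by
      rw [Real.cos_pi_sub, Real.cos_two_mul, hcost]
    have h2 : 2 * b * c ^ 2 = a * c := by linear_combination c * hbc
    have hac : 0 < a * c := mul_pos ha hc0
    unfold polygonEnergy
    rw [← hS, hΨ, hEsum, hc1', hc2', hα0, haτ, haσ, hcost, hAbs]
    nlinarith [h2, hRR, hac]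
  constructor
  · exact ⟨ψ0, hrange0, hElt⟩
  · intro ψ hψrange hmin hcol
    have h1 : polygonEnergy N α ψ ≤ polygonEnergy N α ψ0 := hmin ψ0 hrange0
    have h2 : a - ∑ μ ∈ S, |α μ| ≤ polygonEnergy N α ψ := by
      by_cases hall : ∀ μ ∈ S, ψ μ = 0
      · have hΨ0 : ∑ μ ∈ S, ψ μ = 0 := Finset.sum_eq_zero hall
        have hsum : ∑ μ ∈ S, α μ * Real.cos (ψ μ) = ∑ μ ∈ S, -|α μ| := by
          refine Finset.sum_congr rfl fun μ hμ => ?_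
          rw [hall μ hμ, Real.cos_zero, mul_one, abs_of_neg (hαμ μ hμ), neg_neg]
        unfold polygonEnergy
        rw [← hS, hΨ0, Real.cos_zero, mul_one, hα0, hsum]
        simp
      · push_neg at hall
        obtain ⟨ν, hνS, hν0⟩ := hall
        have hνπ : ψ ν = π := (hcol ν hνS).resolve_left hν0
        have haν : a ≤ |α ν| := hτmin ν hνS
        have e1 : ∑ μ ∈ S, α μ * Real.cos (ψ μ)
            = α ν * Real.cos (ψ ν) + ∑ μ ∈ S.erase ν, α μ * Real.cos (ψ μ) :=
          (Finset.add_sum_erase S _ hνS).symm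
        have e2 : ∑ μ ∈ S, |α μ| = |α ν| + ∑ μ ∈ S.erase ν, |α μ| :=
          (Finset.add_sum_erase S _ hνS).symm
        have e4 : ∑ μ ∈ S.erase ν, -|α μ| ≤ ∑ μ ∈ S.erase ν, α μ * Real.cos (ψ μ) := by
          refine Finset.sum_le_sum fun μ hμ => ?_
          have hc := Real.cos_le_one (ψ μ)
          have hαn := hαμ μ (Finset.mem_of_mem_erase hμ)
          rw [abs_of_neg hαn]
          nlinarith
        have e6 : ∑ μ ∈ S.erase ν, -|α μ| = -∑ μ ∈ S.erase ν, |α μ| := by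
          simp
        have e7 : α ν * Real.cos (ψ ν) = |α ν| := by
          rw [hνπ, Real.cos_pi, abs_of_neg (hαμ ν hνS)]; ring
        have hacos : -a ≤ a * Real.cos (∑ μ ∈ S, ψ μ) := by
          nlinarith [Real.neg_one_le_cos (∑ μ ∈ S, ψ μ)]
        unfold polygonEnergy
        rw [← hS, hα0]
        linarith [e1, e2, e4, e6, e7, hacos, haν]
    linarith
end
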